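/- arXiv:1804.07979 — 9 statements merged into one kernel-verified Lean document; each statement's English description precedes it below -/
import Mathlib

section
/- Let a_{11}, a_{12}, a_{21}, a_{22}, b_1, b_2 ∈ ℝ satisfy the first-order condition b_1 + b_2 = 1, the second-order condition b_1(a_{11} + a_{12}) + b_2(a_{21} + a_{22}) = 1/2, and the trace condition a_{11} + a_{22} = 1/2. Then for every real σ, the numerator Num = 1 + iσ(b_1 + b_2 − a_{11} − a_{22}) + σ²(a_{12}a_{21} − a_{11}a_{22} − b_1(a_{12} − a_{22}) + b_2(a_{11} − a_{21})) is the complex conjugate of the denominator Den = 1 − iσ(a_{11} + a_{22}) + σ²(a_{12}a_{21} − a_{11}a_{22}); consequently if I_2 − iσA is invertible then |G_{N,2}(σ)| = 1. -/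
open Matrix

/-- Under the first-order, second-order, and trace conditions,
the numerator of `G_{N,2}` is the complex conjugate of the denominator;
consequently, whenever `I_2 − iσA` is invertible, `|G_{N,2}(σ)| = 1`. -/
theorem two_stage_minimal_dissipation
    (a11 a12 a21 a22 b1 b2 : ℝ)
    (h1 : b1 + b2 = 1)
    (h2 : b1 * (a11 + a12) + b2 * (a21 + a22) = 1 / 2)
    (h3 : a11 + a22 = 1 / 2) :
    ∀ σ : ℝ,
      ((1 + Complex.I * (σ : ℂ) * ((b1 : ℂ) + b2 - a11 - a22)
          + (σ : ℂ) ^ 2 * ((a12 : ℂ) * a21 - a11 * a22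
              - b1 * (a12 - a22) + b2 * (a11 - a21)))
        = starRingEnd ℂ
            (1 - Complex.I * (σ : ℂ) * ((a11 : ℂ) + a22)
              + (σ : ℂ) ^ 2 * ((a12 : ℂ) * a21 - a11 * a22)))
      ∧ (IsUnit ((1 : Matrix (Fin 2) (Fin 2) ℂ) -
            (Complex.I * (σ : ℂ)) • !![(a11 : ℂ), a12; a21, a22]) →
          ‖(1 + Complex.I * (σ : ℂ) *
            (![(b1 : ℂ), (b2 : ℂ)] ⬝ᵥ
              (((1 : Matrix (Fin 2) (Fin 2) ℂ) -
                (Complex.I * (σ : ℂ)) • !![(a11 : ℂ), a12; a21, a22])⁻¹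
                  *ᵥ ![1, 1])))‖ = 1) := by
  intro σ
  have H1 : (b1 : ℂ) + b2 = 1 := by exact_mod_cast h1
  have H3 : (a11 : ℂ) + a22 = 1 / 2 := by rw [← Complex.ofReal_add, h3]; norm_num
  have hk : b1 * a22 + b2 * a11 - b1 * a12 - b2 * a21 = 0 := by
    linear_combination (a11 + a22) * h1 - h2 + h3
  have HK : (b1 : ℂ) * a22 + b2 * a11 - b1 * a12 - b2 * a21 = 0 := by
    exact_mod_cast hk
  set c : ℂ := Complex.I * (σ : ℂ) with hc
  set Num : ℂ := 1 + c * ((b1 : ℂ) + b2 - a11 - a22)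
      + (σ : ℂ) ^ 2 * ((a12 : ℂ) * a21 - a11 * a22
          - b1 * (a12 - a22) + b2 * (a11 - a21)) with hNum
  set Den : ℂ := 1 - c * ((a11 : ℂ) + a22)
      + (σ : ℂ) ^ 2 * ((a12 : ℂ) * a21 - a11 * a22) with hDen
  have hconj : Num = starRingEnd ℂ Den := by
    rw [hNum, hDen, hc]
    simp only [map_add, map_sub, _root_.map_mul, _root_.map_one, map_pow, Complex.conj_I,
      Complex.conj_ofReal]
    linear_combination Complex.I * (σ : ℂ) * H1 - 2 * Complex.I * (σ : ℂ) * H3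
      + (σ : ℂ) ^ 2 * HK
  refine ⟨hconj, ?_⟩
  intro hU
  set M : Matrix (Fin 2) (Fin 2) ℂ :=
    (1 : Matrix (Fin 2) (Fin 2) ℂ) - c • !![(a11 : ℂ), a12; a21, a22] with hM
  have hMe : M = !![1 - c * a11, -(c * a12); -(c * a21), 1 - c * a22] := by
    rw [hM]
    ext i j
    fin_cases i <;> fin_cases j <;>
      simp [Matrix.one_apply, sub_eq_add_neg]
  have hdet : M.det = Den := by
    rw [hMe, Matrix.det_fin_two_of, hDen, hc]
    ring_nf
    simp [Complex.I_sq]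
    ring
  have hd0 : Den ≠ 0 := by
    rw [← hdet]
    exact ((Matrix.isUnit_iff_isUnit_det M).mp hU).ne_zero
  have hinv : M⁻¹ = Den⁻¹ • !![1 - c * a22, c * a12; c * a21, 1 - c * a11] := by
    rw [Matrix.inv_def, hdet, Ring.inverse_eq_inv']
    congr 1
    rw [hMe, Matrix.adjugate_fin_two_of]
    norm_num
  have hE : 1 + c * (![(b1 : ℂ), (b2 : ℂ)] ⬝ᵥ (M⁻¹ *ᵥ ![1, 1])) = Num / Den := by
    rw [hinv]
    simp only [Matrix.smul_mulVec, Matrix.mulVec, dotProduct,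
      Fin.sum_univ_two, Matrix.cons_val_zero, Matrix.cons_val_one, Matrix.head_cons,
      Matrix.of_apply, Matrix.cons_val', Matrix.empty_val', Matrix.cons_val_fin_one,
      Matrix.head_fin_const, Pi.smul_apply, Matrix.smul_apply, smul_eq_mul]
    field_simp
    rw [hNum, hDen, hc]
    ring_nf
    simp [Complex.I_sq]
    ring
  rw [hE, norm_div, hconj, Complex.norm_conj, div_self]
  exact (norm_ne_zero_iff.mpr hd0)
end

section
/- Let a_{11}, a_{12}, a_{21}, a_{22}, b_1, b_2 ∈ ℝ satisfy b_1 + b_2 = 1, b_1(a_{11} + a_{12}) + b_2(a_{21} + a_{22}) = 1/2, a_{11} + a_{22} = 1/2, together with the third-order conditions b_1(a_{11} + a_{12})² + b_2(a_{21} + a_{22})² = 1/3 and b_1 a_{11}(a_{11} + a_{12}) + b_1 a_{12}(a_{21} + a_{22}) + b_2 a_{21}(a_{11} + a_{12}) + b_2 a_{22}(a_{21} + a_{22}) = 1/6. Then a_{12}a_{21} − a_{11}a_{22} = −1/12. -/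
/-! By Cayley–Hamilton, `A² = (tr A) A - (det A) I` for a `2 × 2` matrix `A`, so with `e = (1, 1)`
the third-order condition reads `1/6 = bᵀA²e = (tr A) bᵀAe - (det A) bᵀe = (tr A)/2 - det A`.
Minimal dissipation `tr A = 1/2` then forces `det A = 1/12`, and `Y = -det A`. -/

namespace Matrix

variable {R : Type*} [CommRing R]

theorem mul_self_fin_two (A : Matrix (Fin 2) (Fin 2) R) :
    A * A = A.trace • A - A.det • (1 : Matrix (Fin 2) (Fin 2) R) := by
  ext i j
  fin_cases i <;> fin_cases j <;>
    simp [mul_apply, trace_fin_two, det_fin_two, Fin.sum_univ_two] <;> ring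

theorem dotProduct_mul_self_mulVec_fin_two (A : Matrix (Fin 2) (Fin 2) R) (b v : Fin 2 → R) :
    b ⬝ᵥ (A * A) *ᵥ v = A.trace * (b ⬝ᵥ A *ᵥ v) - A.det * (b ⬝ᵥ v) := by
  rw [mul_self_fin_two, sub_mulVec, smul_mulVec, smul_mulVec, one_mulVec, dotProduct_sub,
    dotProduct_smul, dotProduct_smul, smul_eq_mul, smul_eq_mul]

end Matrix

open Matrix

theorem two_stage_third_order_forces_Y_general
    (a11 a12 a21 a22 b1 b2 : ℝ)
    (h1 : b1 + b2 = 1)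
    (h2 : b1 * (a11 + a12) + b2 * (a21 + a22) = 1 / 2)
    (h3 : a11 + a22 = 1 / 2)
    (h5 : b1 * a11 * (a11 + a12) + b1 * a12 * (a21 + a22)
        + b2 * a21 * (a11 + a12) + b2 * a22 * (a21 + a22) = 1 / 6) :
    a12 * a21 - a11 * a22 = -(1 / 12) := by
  set A := !![a11, a12; a21, a22]
  set b := ![b1, b2]
  have hb : b ⬝ᵥ 1 = 1 := by simpa [b, dotProduct] using h1
  have hbc : b ⬝ᵥ A *ᵥ 1 = 1 / 2 := by
    simp only [A, b, dotProduct, mulVec, Fin.sum_univ_two, of_apply, cons_val', cons_val_zero,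
      cons_val_one, cons_val_fin_one, Pi.one_apply, mul_one]
    linear_combination h2
  have hbAc : b ⬝ᵥ (A * A) *ᵥ 1 = 1 / 6 := by
    simp only [A, b, dotProduct, mulVec, mul_apply, Fin.sum_univ_two, of_apply, cons_val',
      cons_val_zero, cons_val_one, cons_val_fin_one, Pi.one_apply, mul_one]
    linear_combination h5
  have hdet : A.det = 1 / 12 := by
    have h := dotProduct_mul_self_mulVec_fin_two A b 1
    rw [hb, hbc, hbAc, trace_fin_two_of, h3] at h
    linarith
  rw [det_fin_two_of] at hdet
  linarith

/-- A two-stage minimal-dissipation Runge–Kutta scheme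
(`a₁₁ + a₂₂ = 1/2`) satisfying the order conditions up to third order
necessarily has `Y = a₁₂a₂₁ − a₁₁a₂₂ = −1/12`. -/
theorem two_stage_third_order_forces_Y
    (a11 a12 a21 a22 b1 b2 : ℝ)
    (h1 : b1 + b2 = 1)
    (h2 : b1 * (a11 + a12) + b2 * (a21 + a22) = 1 / 2)
    (h3 : a11 + a22 = 1 / 2)
    (h4 : b1 * (a11 + a12) ^ 2 + b2 * (a21 + a22) ^ 2 = 1 / 3)
    (h5 : b1 * a11 * (a11 + a12) + b1 * a12 * (a21 + a22)
        + b2 * a21 * (a11 + a12) + b2 * a22 * (a21 + a22) = 1 / 6) :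
    a12 * a21 - a11 * a22 = -(1 / 12) :=
  two_stage_third_order_forces_Y_general a11 a12 a21 a22 b1 b2 h1 h2 h3 h5
end

section
/- There is no real number Y satisfying simultaneously Y + 1/12 = 0 and Y² + Y/4 + 1/80 = 0. Consequently, since the phase error of a two-stage minimal-dissipation scheme expands as φ(σ) = (Y + 1/12)σ³ + (Y² + Y/4 + 1/80)σ⁵ + O(σ⁷), no choice of Y makes both the σ³ and σ⁵ coefficients vanish, so the dispersive order of such a scheme never exceeds four. -/
/-!
Write `u = (σ/2)/(1 + σ²Y)`, so that `u = O(σ)`. Since `arctan x = x - x³/3 + x⁵/5 + O(x⁷)`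
(bound the derivative of the remainder, `(-x²)³/(1 + x²)`), the phase error agrees up to
`O(σ⁷)` with the rational function `σ - 2(u - u³/3 + u⁵/5)`, whose expansion is
`(Y + 1/12)σ³ - (Y² + Y/4 + 1/80)σ⁵ + O(σ⁷)`. Hence a phase error of order `O(σ⁶)` forces both
coefficients to vanish, and at `Y = -1/12` the second one is `-1/720 ≠ 0`.
-/

open Asymptotics Filter Finset Real Set Topology

lemma hasDerivAt_arctan_sub_taylor (n : ℕ) (t : ℝ) :
    HasDerivAt (fun x => arctan x - ∑ k ∈ range n, (-1) ^ k * x ^ (2 * k + 1) / (2 * k + 1))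
      ((-t ^ 2) ^ n / (1 + t ^ 2)) t := by
  have hsum := HasDerivAt.fun_sum (u := range n) fun k _ =>
    ((hasDerivAt_pow (2 * k + 1) t).const_mul ((-1 : ℝ) ^ k)).div_const (2 * k + 1)
  refine ((hasDerivAt_arctan t).sub hsum).congr_deriv ?_
  have hterm : ∀ k ∈ range n, (-1 : ℝ) ^ k * (↑(2 * k + 1) * t ^ (2 * k + 1 - 1)) / (2 * k + 1)
      = (-t ^ 2) ^ k := by
    intro k _
    rw [Nat.add_sub_cancel, neg_pow (t ^ 2), ← pow_mul]
    push_cast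
    field_simp
  have hne : -t ^ 2 ≠ 1 := by nlinarith [sq_nonneg t]
  rw [sum_congr rfl hterm, geom_sum_eq hne]
  have : (1 : ℝ) + t ^ 2 ≠ 0 := by positivity
  field_simp
  ring

lemma abs_arctan_sub_taylor_le (n : ℕ) (x : ℝ) :
    |arctan x - ∑ k ∈ range n, (-1) ^ k * x ^ (2 * k + 1) / (2 * k + 1)| ≤ |x| ^ (2 * n + 1) := by
  have hderiv_le : ∀ t ∈ Icc (-|x|) |x|, ‖(-t ^ 2) ^ n / (1 + t ^ 2)‖ ≤ |x| ^ (2 * n) := by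
    intro t ht
    rw [norm_div, norm_pow, norm_neg, norm_pow, Real.norm_eq_abs, Real.norm_eq_abs, sq_abs,
      abs_of_pos (by positivity : (0 : ℝ) < 1 + t ^ 2), pow_mul]
    calc (t ^ 2) ^ n / (1 + t ^ 2) ≤ (t ^ 2) ^ n := div_le_self (by positivity) (by nlinarith)
      _ ≤ (|x| ^ 2) ^ n := pow_le_pow_left₀ (sq_nonneg t) (sq_le_sq' ht.1 ht.2) n
  have := (convex_Icc (-|x|) |x|).norm_image_sub_le_of_norm_hasDerivWithin_le
    (fun t _ => (hasDerivAt_arctan_sub_taylor n t).hasDerivWithinAt) hderiv_le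
    ⟨neg_nonpos.2 (abs_nonneg x), abs_nonneg x⟩ ⟨neg_abs_le x, le_abs_self x⟩
  simpa [pow_succ] using this

lemma arctan_sub_taylor_isBigO (n : ℕ) :
    (fun x => arctan x - ∑ k ∈ range n, (-1) ^ k * x ^ (2 * k + 1) / (2 * k + 1))
      =O[𝓝 0] fun x => x ^ (2 * n + 1) :=
  IsBigO.of_bound 1 <| Eventually.of_forall fun x => by
    simpa using abs_arctan_sub_taylor_le n x

lemma arctan_sub_quintic_isBigO :
    (fun x => arctan x - (x - x ^ 3 / 3 + x ^ 5 / 5)) =O[𝓝 0] fun x => x ^ 7 := by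
  refine (arctan_sub_taylor_isBigO 3).congr_left fun x => ?_
  norm_num [sum_range_succ]
  ring

lemma eq_zero_of_const_mul_pow_isBigO {𝕜 : Type*} [NontriviallyNormedField 𝕜] {c : 𝕜} {k : ℕ}
    (h : (fun x : 𝕜 => c * x ^ k) =O[𝓝 0] fun x => x ^ (k + 1)) : c = 0 := by
  by_contra hc
  have hself : (fun x : 𝕜 => x ^ k) =o[𝓝 0] fun x => x ^ k :=
    ((h.const_mul_left c⁻¹).congr_left fun x => by field_simp).trans_isLittleO
      (isLittleO_pow_pow k.lt_succ_self)
  refine isLittleO_irrefl ?_ hself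
  exact ((eventually_mem_nhdsWithin (s := {0}ᶜ)).mono fun x (hx : x ≠ 0) =>
    pow_ne_zero k hx).frequently.filter_mono nhdsWithin_le_nhds

lemma coeffs_eq_zero_of_isBigO {𝕜 : Type*} [NontriviallyNormedField 𝕜] {a b : 𝕜} {m n : ℕ}
    (hmn : m < n) (h : (fun x : 𝕜 => a * x ^ m + b * x ^ n) =O[𝓝 0] fun x => x ^ (n + 1)) :
    a = 0 ∧ b = 0 := by
  have hpow : ∀ {p q : ℕ}, p ≤ q → (fun x : 𝕜 => x ^ q) =O[𝓝 0] fun x => x ^ p := fun hpq =>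
    hpq.lt_or_eq.elim (fun hlt => (isLittleO_pow_pow hlt).isBigO) fun heq => heq ▸ isBigO_refl _ _
  have ha : a = 0 := by
    refine eq_zero_of_const_mul_pow_isBigO (k := m) ?_
    have hb : (fun x : 𝕜 => b * x ^ n) =O[𝓝 0] fun x => x ^ (m + 1) :=
      (hpow hmn).const_mul_left b
    simpa using (h.trans (hpow (by omega))).sub hb
  subst ha
  exact ⟨rfl, eq_zero_of_const_mul_pow_isBigO (k := n) (by simpa using h)⟩

noncomputable def phaseError (Y σ : ℝ) : ℝ := σ - 2 * arctan ((σ / 2) / (1 + σ ^ 2 * Y))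

lemma phaseError_sub_taylor_isBigO (Y : ℝ) :
    (fun σ => phaseError Y σ - ((Y + 1 / 12) * σ ^ 3 + -(Y ^ 2 + Y / 4 + 1 / 80) * σ ^ 5))
      =O[𝓝 0] fun σ => σ ^ 7 := by
  set D : ℝ → ℝ := fun σ => 1 + σ ^ 2 * Y
  set u : ℝ → ℝ := fun σ => (σ / 2) / D σ
  have hD : ContinuousAt D 0 := by fun_prop
  have hD0 : D 0 ≠ 0 := by simp [D]
  have hu_tendsto : Tendsto u (𝓝 0) (𝓝 0) := by
    have hu_cont : ContinuousAt u 0 := by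
      simp only [u, D]
      fun_prop (disch := norm_num)
    simpa [u] using hu_cont.tendsto
  have hu : u =O[𝓝 0] fun σ => σ := by
    have hc : Tendsto (fun σ => (2 * D σ)⁻¹) (𝓝 0) (𝓝 (2 * D 0)⁻¹) :=
      (continuousAt_const.mul hD).inv₀ (by simpa using hD0)
    refine ((isBigO_refl (fun σ : ℝ => σ) _).mul (hc.isBigO_one ℝ)).congr (fun σ => ?_)
      fun σ => mul_one σ
    simp only [u]
    field_simp
  have harctan := (arctan_sub_quintic_isBigO.comp_tendsto hu_tendsto).trans (hu.pow 7)
  -- With `e = σ²Y`, `σ - 2(u - u³/3 + u⁵/5) = σ³Y/D + σ³/(12D³) - σ⁵/(80D⁵)`, and expanding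
  -- `1/D`, `1/D³`, `1/D⁵` in `e` leaves the remainder `σ⁷ R σ`.
  set R : ℝ → ℝ := fun σ => Y ^ 3 / D σ
    + Y ^ 2 * (6 + 8 * (σ ^ 2 * Y) + 3 * (σ ^ 2 * Y) ^ 2) / (12 * D σ ^ 3)
    + Y * (5 + 10 * (σ ^ 2 * Y) + 10 * (σ ^ 2 * Y) ^ 2 + 5 * (σ ^ 2 * Y) ^ 3 + (σ ^ 2 * Y) ^ 4)
      / (80 * D σ ^ 5)
  have hR : ContinuousAt R 0 := by
    simp only [R, D]
    fun_prop (disch := norm_num)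
  have hrational : (fun σ => σ ^ 7 * R σ) =O[𝓝 0] fun σ => σ ^ 7 :=
    ((isBigO_refl _ _).mul (hR.tendsto.isBigO_one ℝ)).congr_right fun σ => mul_one _
  refine ((harctan.const_mul_left (-2)).add hrational).congr' ?_ (Eventually.of_forall fun _ => rfl)
  filter_upwards [hD.eventually_ne hD0] with σ hσ
  simp only [phaseError, Function.comp, u, R]
  simp only [D] at hσ ⊢
  field_simp
  ring

lemma coeffs_eq_zero_of_phaseError_isBigO {Y : ℝ} (h : phaseError Y =O[𝓝 0] fun σ => σ ^ 6) :
    Y + 1 / 12 = 0 ∧ Y ^ 2 + Y / 4 + 1 / 80 = 0 := by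
  have hexpansion :=
    (phaseError_sub_taylor_isBigO Y).trans (isLittleO_pow_pow (by norm_num : 6 < 7)).isBigO
  obtain ⟨h3, h5⟩ := coeffs_eq_zero_of_isBigO (by norm_num : 3 < 5)
    ((h.sub hexpansion).congr_left fun σ => sub_sub_cancel _ _)
  exact ⟨h3, neg_eq_zero.1 h5⟩

/-- No real `Y` annihilates both the `σ³` and the `σ⁵`
coefficients of the two-stage phase error expansion; consequently, for no `Y`
is the phase error `σ − 2·arctan((σ/2)/(1 + σ²Y))` of order `O(σ⁶)`, i.e. the
dispersive order of a two-stage minimal-dissipation scheme never exceeds four. -/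
theorem two_stage_dispersive_order_at_most_four :
    (¬ ∃ Y : ℝ, Y + 1 / 12 = 0 ∧ Y ^ 2 + Y / 4 + 1 / 80 = 0)
    ∧ ∀ Y : ℝ,
      ¬ ((fun σ : ℝ => σ - 2 * Real.arctan ((σ / 2) / (1 + σ ^ 2 * Y)))
        =O[nhds 0] (fun σ : ℝ => σ ^ 6)) := by
  have hno_root : ¬ ∃ Y : ℝ, Y + 1 / 12 = 0 ∧ Y ^ 2 + Y / 4 + 1 / 80 = 0 := by
    rintro ⟨Y, h3, h5⟩
    obtain rfl : Y = -1 / 12 := by linarith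
    norm_num at h5
  exact ⟨hno_root, fun Y hO => hno_root ⟨Y, coeffs_eq_zero_of_phaseError_isBigO hO⟩⟩
end

section
/- Let A = (a_{rs})_{3×3}, b = (b_1, b_2, b_3) be real with b_1 + b_2 + b_3 = 1 and ∑_r b_r(a_{r1} + a_{r2} + a_{r3}) = 1/2. If additionally a_{11} + a_{22} + a_{33} = 1/2 and 2D = S hold (where D = a_{11}a_{22}a_{33} + a_{12}a_{23}a_{31} + a_{21}a_{32}a_{13} − a_{11}a_{23}a_{32} − a_{22}a_{31}a_{13} − a_{33}a_{12}a_{21} and S = (a_{22}a_{33} + a_{12}a_{23} + a_{13}a_{32} − a_{23}a_{32} − a_{12}a_{33} − a_{13}a_{22})b_1 + (a_{33}a_{11} + a_{23}a_{31} + a_{21}a_{13} − a_{31}a_{13} − a_{23}a_{11} − a_{21}a_{33})b_2 + (a_{11}a_{22} + a_{31}a_{12} + a_{32}a_{21} − a_{12}a_{21} − a_{31}a_{22} − a_{32}a_{11})b_3), then |G_{N,3}(σ)| = 1 for every real σ with I_3 − iσA invertible. -/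
/-!
By the matrix determinant lemma, `G(z) = det (I - z (A - 𝟙 bᵀ)) / det (I - z A)`. Comparing the
coefficients of `z`, `z²` and `z³`, the numerator is `det (I + z A)` as soon as
`2 tr A = bᵀ𝟙`, `tr A · bᵀ𝟙 = bᵀA𝟙` and `2 det A = bᵀ adj(A) 𝟙 = S`, which the order conditions,
`tr A = 1/2` and `2D = S` guarantee. As `A` is real, at `z = iσ` the numerator is then the complex
conjugate of the denominator, so `|G(iσ)| = 1`.
-/

open Matrix ComplexConjugate

namespace Matrix

variable {n : Type*} [Fintype n] [DecidableEq n]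

theorem one_add_dotProduct_inv_mulVec {K : Type*} [Field K] {M : Matrix n n K} (hM : M.det ≠ 0)
    (u v : n → K) : 1 + v ⬝ᵥ (M⁻¹ *ᵥ u) = (M + vecMulVec u v).det / M.det := by
  rw [vecMulVec_eq Unit, det_add_replicateCol_mul_replicateRow hM.isUnit,
    mul_div_cancel_left₀ _ hM, Matrix.mul_assoc, ← replicateCol_mulVec,
    replicateRow_mul_replicateCol, det_unique]
  rfl

theorem det_one_sub_smul_sub_vecMulVec {R : Type*} [CommRing R] {A : Matrix (Fin 3) (Fin 3) R}
    {u b : Fin 3 → R} (htr : 2 * A.trace = b ⬝ᵥ u) (hm : A.trace * (b ⬝ᵥ u) = b ⬝ᵥ A *ᵥ u)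
    (hdet : 2 * A.det = b ⬝ᵥ A.adjugate *ᵥ u) (z : R) :
    (1 - z • (A - vecMulVec u b)).det = (1 + z • A).det := by
  simp only [det_fin_three, adjugate_fin_three, trace_fin_three, dotProduct, Fin.sum_univ_three,
    mulVec, vecMulVec_apply, of_apply, cons_val', cons_val_zero, cons_val_one, cons_val,
    cons_val_fin_one, sub_apply, add_apply, smul_apply, smul_eq_mul, one_apply_eq, one_apply_ne,
    ne_eq, Fin.reduceEq, not_false_eq_true] at *
  linear_combination (-z) * htr - z ^ 2 * hm - z ^ 3 * hdet

theorem conj_det_one_sub_smul {A : Matrix n n ℂ} (hA : ∀ i j, conj (A i j) = A i j) (z : ℂ) :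
    conj (1 - z • A).det = (1 - conj z • A).det := by
  rw [RingHom.map_det]
  congr 1
  ext i j
  simp [one_apply, apply_ite conj, hA]

end Matrix

noncomputable def amplificationFactor {n K : Type*} [Fintype n] [DecidableEq n] [Field K]
    (A : Matrix n n K) (b : n → K) (z : K) : K :=
  1 + z * (b ⬝ᵥ ((1 - z • A)⁻¹ *ᵥ 1))

theorem amplificationFactor_eq_det_div {n K : Type*} [Fintype n] [DecidableEq n] [Field K]
    {A : Matrix n n K} (b : n → K) {z : K} (h : (1 - z • A).det ≠ 0) :
    amplificationFactor A b z = (1 - z • (A - vecMulVec 1 b)).det / (1 - z • A).det := by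
  rw [amplificationFactor, ← smul_eq_mul, ← dotProduct_smul, ← mulVec_smul,
    one_add_dotProduct_inv_mulVec h, smul_vecMulVec, smul_sub, sub_sub_eq_add_sub,
    add_sub_right_comm]

theorem norm_amplificationFactor_eq_one {A : Matrix (Fin 3) (Fin 3) ℂ} {b : Fin 3 → ℂ}
    (hA : ∀ i j, conj (A i j) = A i j) (hb : b ⬝ᵥ 1 = 1) (hbA : b ⬝ᵥ A *ᵥ 1 = 1 / 2)
    (htr : A.trace = 1 / 2) (hdet : 2 * A.det = b ⬝ᵥ A.adjugate *ᵥ 1) {z : ℂ} (hz : conj z = -z)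
    (h : (1 - z • A).det ≠ 0) : ‖amplificationFactor A b z‖ = 1 := by
  have htr_two : 2 * A.trace = b ⬝ᵥ 1 := by rw [htr, hb]; norm_num
  have htr_mul : A.trace * (b ⬝ᵥ 1) = b ⬝ᵥ A *ᵥ 1 := by rw [htr, hb, hbA, mul_one]
  rw [amplificationFactor_eq_det_div b h, det_one_sub_smul_sub_vecMulVec htr_two htr_mul hdet,
    ← sub_neg_eq_add, ← neg_smul, ← hz, ← conj_det_one_sub_smul hA, norm_div, Complex.norm_conj,
    div_self (norm_ne_zero_iff.mpr h)]

/-- A three-stage, at least second-order accurate,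
Runge–Kutta scheme with `tr A = 1/2` and `2D = S` has amplification factor of
unit modulus: `|G_{N,3}(σ)| = 1` for every real `σ` with `I₃ − iσA`
invertible (minimal dissipation). -/
theorem three_stage_minimal_dissipation
    (a11 a12 a13 a21 a22 a23 a31 a32 a33 b1 b2 b3 : ℝ)
    (h1 : b1 + b2 + b3 = 1)
    (h2 : b1 * (a11 + a12 + a13) + b2 * (a21 + a22 + a23)
        + b3 * (a31 + a32 + a33) = 1 / 2)
    (htr : a11 + a22 + a33 = 1 / 2)
    (D S : ℝ)
    (hD : D = a11 * a22 * a33 + a12 * a23 * a31 + a21 * a32 * a13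
        - a11 * a23 * a32 - a22 * a31 * a13 - a33 * a12 * a21)
    (hS : S = (a22 * a33 + a12 * a23 + a13 * a32
          - a23 * a32 - a12 * a33 - a13 * a22) * b1
        + (a33 * a11 + a23 * a31 + a21 * a13
          - a31 * a13 - a23 * a11 - a21 * a33) * b2
        + (a11 * a22 + a31 * a12 + a32 * a21
          - a12 * a21 - a31 * a22 - a32 * a11) * b3)
    (hDS : 2 * D = S) :
    ∀ σ : ℝ,
      IsUnit ((1 : Matrix (Fin 3) (Fin 3) ℂ) - (Complex.I * (σ : ℂ)) •
        !![(a11 : ℂ), a12, a13; a21, a22, a23; a31, a32, a33]) →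
      ‖1 + Complex.I * (σ : ℂ) *
          (![(b1 : ℂ), (b2 : ℂ), (b3 : ℂ)] ⬝ᵥ
            (((1 : Matrix (Fin 3) (Fin 3) ℂ) - (Complex.I * (σ : ℂ)) •
              !![(a11 : ℂ), a12, a13; a21, a22, a23; a31, a32, a33])⁻¹
                *ᵥ ![1, 1, 1]))‖ = 1 := by
  intro σ hinv
  set A : Matrix (Fin 3) (Fin 3) ℂ := !![(a11 : ℂ), a12, a13; a21, a22, a23; a31, a32, a33]
  set b : Fin 3 → ℂ := ![(b1 : ℂ), (b2 : ℂ), (b3 : ℂ)]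
  have hA : ∀ i j, conj (A i j) = A i j := by
    intro i j
    fin_cases i <;> fin_cases j <;> simp [A]
  have hb : b ⬝ᵥ 1 = 1 := by
    simpa [b, dotProduct, Fin.sum_univ_three] using congrArg Complex.ofReal h1
  have hbA : b ⬝ᵥ A *ᵥ 1 = 1 / 2 := by
    simpa [A, b, dotProduct, Fin.sum_univ_three, mulVec] using congrArg Complex.ofReal h2
  have htrA : A.trace = 1 / 2 := by
    simpa [A, trace_fin_three] using congrArg Complex.ofReal htr
  have hdet : 2 * A.det = b ⬝ᵥ A.adjugate *ᵥ 1 := by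
    have hDS' := congrArg Complex.ofReal (hD ▸ hS ▸ hDS)
    push_cast at hDS'
    simp only [A, b, det_fin_three, adjugate_fin_three, dotProduct, Fin.sum_univ_three, mulVec,
      of_apply, cons_val', cons_val_zero, cons_val_one, cons_val, cons_val_fin_one, Pi.one_apply]
    linear_combination hDS'
  have hone : ![(1 : ℂ), 1, 1] = 1 := by
    ext i
    fin_cases i <;> rfl
  rw [hone]
  exact norm_amplificationFactor_eq_one hA hb hbA htrA hdet (by simp)
    ((isUnit_iff_isUnit_det _).mp hinv).ne_zero
end

section
/- Let A = (a_{rs})_{3×3}, b = (b_1, b_2, b_3) be real, c_r = a_{r1} + a_{r2} + a_{r3}, and suppose the fourth-order conditions hold: ∑b_r = 1, ∑b_r c_r = 1/2, ∑b_r c_r² = 1/3, ∑_{r,s} b_r a_{rs} c_s = 1/6, ∑b_r c_r³ = 1/4, ∑_{r,s} b_r c_r a_{rs} c_s = 1/8, ∑_{r,s} b_r a_{rs} c_s² = 1/12, ∑_{r,s,l} b_r a_{rs} a_{sl} c_l = 1/24, together with a_{11} + a_{22} + a_{33} = 1/2. Then (i) 2D − S = 0 and (ii) −2D + M = 1/12,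 where D = a_{11}a_{22}a_{33} + a_{12}a_{23}a_{31} + a_{21}a_{32}a_{13} − a_{11}a_{23}a_{32} − a_{22}a_{31}a_{13} − a_{33}a_{12}a_{21}, M = a_{11}a_{22} + a_{22}a_{33} + a_{33}a_{11} − a_{12}a_{21} − a_{23}a_{32} − a_{31}a_{13}, and S = (a_{22}a_{33} + a_{12}a_{23} + a_{13}a_{32} − a_{23}a_{32} − a_{12}a_{33} − a_{13}a_{22})b_1 + (a_{33}a_{11} + a_{23}a_{31} + a_{21}a_{13} − a_{31}a_{13} − a_{23}a_{11} − a_{21}a_{33})b_2 + (a_{11}a_{22} + a_{31}a_{12} + a_{32}a_{21} − a_{12}a_{21} − a_{31}a_{22} − a_{32}a_{11})b_3. -/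
/-!
For a `3 × 3` matrix with sum of principal `2 × 2` minors `m`, the Cayley–Hamilton theorem gives
`A³ = tr A • A² - m • A + det A • 1` and `adj A = A² - tr A • A + m • 1`. With `c = A 𝟙`, the
conditions on `∑ b`, `∑ b c`, `∑ b A c` and `∑ b A A c` say `bᵀ Aᵏ 𝟙 = 1 / k!` for `k ≤ 3`.
Since `D = det A`, `M = m` and `S = bᵀ (adj A) 𝟙`, pairing both identities with `b` and `𝟙` and
using `tr A = 1/2` gives `1/24 = 1/12 - M/2 + D` and `S = 1/6 - 1/4 + M`.
-/

open Matrix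

namespace Matrix

variable {R : Type*} [CommRing R]

/-- The sum of the principal `2 × 2` minors: the coefficient of `X` in the characteristic
polynomial `X³ - tr A • X² + m • X - det A`. -/
def principalMinorSum (A : Matrix (Fin 3) (Fin 3) R) : R :=
  A 0 0 * A 1 1 - A 0 1 * A 1 0 + A 1 1 * A 2 2 - A 1 2 * A 2 1 + A 2 2 * A 0 0 - A 2 0 * A 0 2

theorem adjugate_fin_three_eq (A : Matrix (Fin 3) (Fin 3) R) :
    adjugate A = A ^ 2 - trace A • A + principalMinorSum A • 1 := by
  ext i j
  fin_cases i <;> fin_cases j <;>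
    simp [adjugate_fin_three, principalMinorSum, trace_fin_three, sq, mul_apply,
      Fin.sum_univ_three] <;> ring

theorem pow_three_fin_three (A : Matrix (Fin 3) (Fin 3) R) :
    A ^ 3 = trace A • A ^ 2 - principalMinorSum A • A + det A • 1 := by
  have h := mul_adjugate A
  rw [adjugate_fin_three_eq, mul_add, mul_sub, mul_smul_comm, mul_smul_comm, mul_one, ← sq] at h
  rw [pow_succ', ← h]
  abel

end Matrix

section ButcherSums

variable {n R : Type*} [Fintype n] [CommRing R]

theorem dotProduct_mulVec_eq_sum_sum (b v : n → R) (A : Matrix n n R) :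
    b ⬝ᵥ (A *ᵥ v) = ∑ r, ∑ s, b r * A r s * v s := by
  simp [dotProduct, mulVec, Finset.mul_sum, mul_assoc]

theorem dotProduct_sq_mulVec_eq_sum_sum_sum [DecidableEq n] (b v : n → R) (A : Matrix n n R) :
    b ⬝ᵥ (A ^ 2 *ᵥ v) = ∑ r, ∑ s, ∑ l, b r * A r s * A s l * v l := by
  rw [sq, ← mulVec_mulVec, dotProduct_mulVec_eq_sum_sum]
  simp [mulVec, dotProduct, Finset.mul_sum, mul_assoc]

end ButcherSums

theorem three_stage_fourth_order_identities_general
    (A : Matrix (Fin 3) (Fin 3) ℝ) (b : Fin 3 → ℝ) (c : Fin 3 → ℝ)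
    (hc : ∀ r, c r = ∑ s, A r s)
    (h1 : ∑ r, b r = 1)
    (h2 : ∑ r, b r * c r = 1 / 2)
    (h4 : ∑ r, ∑ s, b r * A r s * c s = 1 / 6)
    (h8 : ∑ r, ∑ s, ∑ l, b r * A r s * A s l * c l = 1 / 24)
    (htr : A 0 0 + A 1 1 + A 2 2 = 1 / 2)
    (D M S : ℝ)
    (hD : D = A 0 0 * A 1 1 * A 2 2 + A 0 1 * A 1 2 * A 2 0
        + A 1 0 * A 2 1 * A 0 2 - A 0 0 * A 1 2 * A 2 1
        - A 1 1 * A 2 0 * A 0 2 - A 2 2 * A 0 1 * A 1 0)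
    (hM : M = A 0 0 * A 1 1 + A 1 1 * A 2 2 + A 2 2 * A 0 0
        - A 0 1 * A 1 0 - A 1 2 * A 2 1 - A 2 0 * A 0 2)
    (hS : S = (A 1 1 * A 2 2 + A 0 1 * A 1 2 + A 0 2 * A 2 1
          - A 1 2 * A 2 1 - A 0 1 * A 2 2 - A 0 2 * A 1 1) * b 0
        + (A 2 2 * A 0 0 + A 1 2 * A 2 0 + A 1 0 * A 0 2
          - A 2 0 * A 0 2 - A 1 2 * A 0 0 - A 1 0 * A 2 2) * b 1
        + (A 0 0 * A 1 1 + A 2 0 * A 0 1 + A 2 1 * A 1 0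
          - A 0 1 * A 1 0 - A 2 0 * A 1 1 - A 2 1 * A 0 0) * b 2) :
    2 * D - S = 0 ∧ -2 * D + M = 1 / 12 := by
  have hc' : c = A *ᵥ 1 := funext fun r => by simp [hc, mulVec, dotProduct]
  have w0 : b ⬝ᵥ 1 = 1 := by simpa [dotProduct] using h1
  have w1 : b ⬝ᵥ (A *ᵥ 1) = 1 / 2 := by rw [← hc']; exact h2
  have w2 : b ⬝ᵥ (A ^ 2 *ᵥ 1) = 1 / 6 := by
    rw [sq, ← mulVec_mulVec, ← hc', dotProduct_mulVec_eq_sum_sum, h4]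
  have w3 : b ⬝ᵥ (A ^ 3 *ᵥ 1) = 1 / 24 := by
    rw [pow_succ, ← mulVec_mulVec, ← hc', dotProduct_sq_mulVec_eq_sum_sum_sum, h8]
  have hT : trace A = 1 / 2 := by rw [trace_fin_three, htr]
  have hD' : D = det A := by rw [hD, det_fin_three]; ring
  have hM' : M = principalMinorSum A := by rw [hM, principalMinorSum]; ring
  have hS' : S = b ⬝ᵥ (adjugate A *ᵥ 1) := by
    rw [hS]; simp only [dotProduct, mulVec, adjugate_fin_three, of_apply, cons_val', cons_val_fin_one,
      Pi.one_apply, mul_one, Fin.sum_univ_three, cons_val_zero, cons_val_one, cons_val]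
    ring
  have hadj := congrArg (fun X => b ⬝ᵥ (X *ᵥ 1)) (adjugate_fin_three_eq A)
  have hcube := congrArg (fun X => b ⬝ᵥ (X *ᵥ 1)) (pow_three_fin_three A)
  simp only [add_mulVec, sub_mulVec, smul_mulVec, one_mulVec, dotProduct_add, dotProduct_sub,
    dotProduct_smul, smul_eq_mul, w0, w1, w2, w3, hT] at hadj hcube
  constructor <;> linarith

/-- For a three-stage Runge–Kutta scheme satisfying the eight
fourth-order Butcher conditions together with the trace condition
`a₁₁ + a₂₂ + a₃₃ = 1/2`, one has (i) `2D − S = 0` and (ii) `−2D + M = 1/12`. -/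
theorem three_stage_fourth_order_identities
    (A : Matrix (Fin 3) (Fin 3) ℝ) (b : Fin 3 → ℝ) (c : Fin 3 → ℝ)
    (hc : ∀ r, c r = ∑ s, A r s)
    (h1 : ∑ r, b r = 1)
    (h2 : ∑ r, b r * c r = 1 / 2)
    (h3 : ∑ r, b r * c r ^ 2 = 1 / 3)
    (h4 : ∑ r, ∑ s, b r * A r s * c s = 1 / 6)
    (h5 : ∑ r, b r * c r ^ 3 = 1 / 4)
    (h6 : ∑ r, ∑ s, b r * c r * A r s * c s = 1 / 8)
    (h7 : ∑ r, ∑ s, b r * A r s * c s ^ 2 = 1 / 12)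
    (h8 : ∑ r, ∑ s, ∑ l, b r * A r s * A s l * c l = 1 / 24)
    (htr : A 0 0 + A 1 1 + A 2 2 = 1 / 2)
    (D M S : ℝ)
    (hD : D = A 0 0 * A 1 1 * A 2 2 + A 0 1 * A 1 2 * A 2 0
        + A 1 0 * A 2 1 * A 0 2 - A 0 0 * A 1 2 * A 2 1
        - A 1 1 * A 2 0 * A 0 2 - A 2 2 * A 0 1 * A 1 0)
    (hM : M = A 0 0 * A 1 1 + A 1 1 * A 2 2 + A 2 2 * A 0 0
        - A 0 1 * A 1 0 - A 1 2 * A 2 1 - A 2 0 * A 0 2)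
    (hS : S = (A 1 1 * A 2 2 + A 0 1 * A 1 2 + A 0 2 * A 2 1
          - A 1 2 * A 2 1 - A 0 1 * A 2 2 - A 0 2 * A 1 1) * b 0
        + (A 2 2 * A 0 0 + A 1 2 * A 2 0 + A 1 0 * A 0 2
          - A 2 0 * A 0 2 - A 1 2 * A 0 0 - A 1 0 * A 2 2) * b 1
        + (A 0 0 * A 1 1 + A 2 0 * A 0 1 + A 2 1 * A 1 0
          - A 0 1 * A 1 0 - A 2 0 * A 1 1 - A 2 1 * A 0 0) * b 2) :
    2 * D - S = 0 ∧ -2 * D + M = 1 / 12 :=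
  three_stage_fourth_order_identities_general A b c hc h1 h2 h4 h8 htr D M S hD hM hS
end

section
/- Let A = (a_{rs})_{3×3}, b = (b_1, b_2, b_3) be real with b_1 + b_2 + b_3 = 1, ∑_r b_r(a_{r1} + a_{r2} + a_{r3}) = 1/2, a_{11} + a_{22} + a_{33} = 1/2, 2D = S, and −2D + X = 1/12, where X = a_{11}a_{22} + a_{22}a_{33} + a_{33}a_{11} − a_{12}a_{21} − a_{23}a_{32} − a_{31}a_{13} and D, S are as in the minimal-dissipation conditions. Then for every real σ with I_3 − iσA invertible, G_{N,3}(σ) = ((σ/2 − (σ³/2)(X − 1/12)) + i(σ²X − 1)) / (−(σ/2 − (σ³/2)(X − 1/12)) + i(σ²X − 1)); in particular |G_{N,3}(σ)| = 1 and the amplification factor depends on A, b only through X. -/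
open Matrix

/-- For a three-stage, at least second-order accurate,
minimal-dissipation scheme (`tr A = 1/2`, `2D = S`) additionally satisfying
`−2D + X = 1/12`, the amplification factor equals
`((σ/2 − (σ³/2)(X − 1/12)) + i(σ²X − 1)) / (−(σ/2 − (σ³/2)(X − 1/12)) + i(σ²X − 1))`;
in particular `|G_{N,3}(σ)| = 1` and `G_{N,3}` depends on `A, b` only
through `X`. -/
theorem three_stage_amplification_via_X
    (a11 a12 a13 a21 a22 a23 a31 a32 a33 b1 b2 b3 : ℝ)
    (h1 : b1 + b2 + b3 = 1)
    (h2 : b1 * (a11 + a12 + a13) + b2 * (a21 + a22 + a23)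
        + b3 * (a31 + a32 + a33) = 1 / 2)
    (htr : a11 + a22 + a33 = 1 / 2)
    (D S X : ℝ)
    (hD : D = a11 * a22 * a33 + a12 * a23 * a31 + a21 * a32 * a13
        - a11 * a23 * a32 - a22 * a31 * a13 - a33 * a12 * a21)
    (hS : S = (a22 * a33 + a12 * a23 + a13 * a32
          - a23 * a32 - a12 * a33 - a13 * a22) * b1
        + (a33 * a11 + a23 * a31 + a21 * a13
          - a31 * a13 - a23 * a11 - a21 * a33) * b2
        + (a11 * a22 + a31 * a12 + a32 * a21
          - a12 * a21 - a31 * a22 - a32 * a11) * b3)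
    (hX : X = a11 * a22 + a22 * a33 + a33 * a11
        - a12 * a21 - a23 * a32 - a31 * a13)
    (hDS : 2 * D = S)
    (hDX : -2 * D + X = 1 / 12) :
    ∀ σ : ℝ,
      IsUnit ((1 : Matrix (Fin 3) (Fin 3) ℂ) - (Complex.I * (σ : ℂ)) •
        !![(a11 : ℂ), a12, a13; a21, a22, a23; a31, a32, a33]) →
      ((1 + Complex.I * (σ : ℂ) *
          (![(b1 : ℂ), (b2 : ℂ), (b3 : ℂ)] ⬝ᵥ
            (((1 : Matrix (Fin 3) (Fin 3) ℂ) - (Complex.I * (σ : ℂ)) •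
              !![(a11 : ℂ), a12, a13; a21, a22, a23; a31, a32, a33])⁻¹
                *ᵥ ![1, 1, 1])))
        = (((σ : ℂ) / 2 - ((σ : ℂ) ^ 3 / 2) * ((X : ℂ) - 1 / 12))
              + Complex.I * ((σ : ℂ) ^ 2 * (X : ℂ) - 1))
          / (-((σ : ℂ) / 2 - ((σ : ℂ) ^ 3 / 2) * ((X : ℂ) - 1 / 12))
              + Complex.I * ((σ : ℂ) ^ 2 * (X : ℂ) - 1)))
      ∧ ‖1 + Complex.I * (σ : ℂ) *
          (![(b1 : ℂ), (b2 : ℂ), (b3 : ℂ)] ⬝ᵥ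
            (((1 : Matrix (Fin 3) (Fin 3) ℂ) - (Complex.I * (σ : ℂ)) •
              !![(a11 : ℂ), a12, a13; a21, a22, a23; a31, a32, a33])⁻¹
                *ᵥ ![1, 1, 1]))‖ = 1 := by
  -- derived real facts
  have hDval : a11 * a22 * a33 + a12 * a23 * a31 + a21 * a32 * a13
      - a11 * a23 * a32 - a22 * a31 * a13 - a33 * a12 * a21 = (X - 1/12)/2 := by
    linarith
  have hSval : (a22 * a33 + a12 * a23 + a13 * a32
          - a23 * a32 - a12 * a33 - a13 * a22) * b1
        + (a33 * a11 + a23 * a31 + a21 * a13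
          - a31 * a13 - a23 * a11 - a21 * a33) * b2
        + (a11 * a22 + a31 * a12 + a32 * a21
          - a12 * a21 - a31 * a22 - a32 * a11) * b3 = X - 1/12 := by
    linarith
  -- complex casts of the hypotheses
  have hC1 : (b1 : ℂ) + b2 + b3 = 1 := by exact_mod_cast h1
  have hC2 : (b1 : ℂ) * (a11 + a12 + a13) + b2 * (a21 + a22 + a23)
      + b3 * (a31 + a32 + a33) = 1 / 2 := by
    have := congrArg Complex.ofReal h2; push_cast at this; exact this
  have hC3 : (a11 : ℂ) + a22 + a33 = 1 / 2 := by
    have := congrArg Complex.ofReal htr; push_cast at this; exact this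
  have hC6 : (a11 : ℂ) * a22 + a22 * a33 + a33 * a11
      - a12 * a21 - a23 * a32 - a31 * a13 = (X : ℂ) := by exact_mod_cast hX.symm
  have hC4 : (a11 : ℂ) * a22 * a33 + a12 * a23 * a31 + a21 * a32 * a13
      - a11 * a23 * a32 - a22 * a31 * a13 - a33 * a12 * a21 = ((X : ℂ) - 1/12)/2 := by
    have := congrArg Complex.ofReal hDval; push_cast at this; exact this
  have hC5 : ((a22 : ℂ) * a33 + a12 * a23 + a13 * a32
          - a23 * a32 - a12 * a33 - a13 * a22) * b1
        + (a33 * a11 + a23 * a31 + a21 * a13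
          - a31 * a13 - a23 * a11 - a21 * a33) * b2
        + (a11 * a22 + a31 * a12 + a32 * a21
          - a12 * a21 - a31 * a22 - a32 * a11) * b3 = (X : ℂ) - 1/12 := by
    have := congrArg Complex.ofReal hSval; push_cast at this; exact this
  intro σ hU
  set A : Matrix (Fin 3) (Fin 3) ℂ :=
    !![(a11 : ℂ), a12, a13; a21, a22, a23; a31, a32, a33] with hA
  set M : Matrix (Fin 3) (Fin 3) ℂ := 1 - (Complex.I * (σ : ℂ)) • A with hM
  have hdetU : IsUnit M.det := (Matrix.isUnit_iff_isUnit_det M).mp hU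
  have hdet_ne : M.det ≠ 0 := hdetU.ne_zero
  -- determinant value
  have hden : M.det = -((σ : ℂ) ^ 2 * (X : ℂ) - 1)
      - Complex.I * ((σ : ℂ) / 2 - ((σ : ℂ) ^ 3 / 2) * ((X : ℂ) - 1/12)) := by
    rw [Matrix.det_fin_three]
    simp only [hM, hA, Matrix.sub_apply, Matrix.smul_apply, Matrix.one_apply,
      smul_eq_mul, Matrix.cons_val', Matrix.cons_val_zero, Matrix.cons_val_one,
      Matrix.head_cons, Matrix.empty_val', Matrix.cons_val_fin_one, Matrix.head_fin_const,
      Fin.isValue, Matrix.of_apply, Matrix.cons_val, Fin.reduceEq, reduceIte]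
    norm_num
    linear_combination (-Complex.I * (σ:ℂ)) * hC3 + (Complex.I^2 * (σ:ℂ)^2) * hC6
      - (Complex.I^3 * (σ:ℂ)^3) * hC4
      + ((σ:ℂ)^2 * (X:ℂ) - Complex.I * (σ:ℂ)^3 * ((X:ℂ) - 1/12)/2) * Complex.I_sq
  -- numerator value
  have hQ : M.det + (Complex.I * (σ : ℂ)) *
        (![(b1 : ℂ), (b2 : ℂ), (b3 : ℂ)] ⬝ᵥ (M.adjugate *ᵥ ![1, 1, 1]))
      = -((σ : ℂ) ^ 2 * (X : ℂ) - 1)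
        + Complex.I * ((σ : ℂ) / 2 - ((σ : ℂ) ^ 3 / 2) * ((X : ℂ) - 1/12)) := by
    rw [Matrix.det_fin_three, Matrix.adjugate_fin_three]
    simp only [hM, hA, Matrix.sub_apply, Matrix.smul_apply, Matrix.one_apply,
      smul_eq_mul, Matrix.cons_val', Matrix.cons_val_zero, Matrix.cons_val_one,
      Matrix.head_cons, Matrix.empty_val', Matrix.cons_val_fin_one, Matrix.head_fin_const,
      Fin.isValue, Matrix.mulVec, dotProduct, Fin.sum_univ_three,
      Matrix.cons_val_two, Matrix.tail_cons, Matrix.of_apply, Matrix.cons_val, Fin.reduceEq, reduceIte]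
    norm_num
    linear_combination (Complex.I * (σ:ℂ)) * hC1 - (Complex.I * (σ:ℂ)) * hC3
      + (Complex.I * (σ:ℂ))^2 * hC6 + (Complex.I * (σ:ℂ))^2 * hC2
      - (Complex.I * (σ:ℂ))^2 * ((a11:ℂ) + a22 + a33) * hC1
      - (Complex.I * (σ:ℂ))^2 * hC3
      + (Complex.I * (σ:ℂ))^3 * hC5 - (Complex.I * (σ:ℂ))^3 * hC4
      + ((σ:ℂ)^2 * (X:ℂ) + Complex.I * (σ:ℂ)^3 * ((X:ℂ) - 1/12)/2) * Complex.I_sq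
  -- rewrite the amplification factor as a quotient
  have hGv : ![(b1 : ℂ), (b2 : ℂ), (b3 : ℂ)] ⬝ᵥ (M⁻¹ *ᵥ ![1, 1, 1])
      = M.det⁻¹ * (![(b1 : ℂ), (b2 : ℂ), (b3 : ℂ)] ⬝ᵥ (M.adjugate *ᵥ ![1, 1, 1])) := by
    rw [Matrix.inv_def, Ring.inverse_eq_inv', Matrix.smul_mulVec,
      dotProduct_smul, smul_eq_mul]
  set Q : ℂ := ![(b1 : ℂ), (b2 : ℂ), (b3 : ℂ)] ⬝ᵥ (M.adjugate *ᵥ ![1, 1, 1]) with hQdef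
  have hGq : 1 + Complex.I * (σ : ℂ) * (![(b1 : ℂ), (b2 : ℂ), (b3 : ℂ)] ⬝ᵥ (M⁻¹ *ᵥ ![1, 1, 1]))
      = (M.det + Complex.I * (σ : ℂ) * Q) / M.det := by
    rw [hGv]
    field_simp
  -- abbreviations
  set r : ℂ := (σ : ℂ) / 2 - ((σ : ℂ) ^ 3 / 2) * ((X : ℂ) - 1/12) with hr
  set s : ℂ := (σ : ℂ) ^ 2 * (X : ℂ) - 1 with hs
  have hden' : M.det = -s - Complex.I * r := hden
  have hnum' : M.det + Complex.I * (σ : ℂ) * Q = -s + Complex.I * r := hQ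
  have hden_ne2 : (-r + Complex.I * s) ≠ 0 := by
    intro h0
    apply hdet_ne
    rw [hden']
    have : Complex.I * (-r + Complex.I * s) = -s - Complex.I * r := by
      linear_combination s * Complex.I_sq
    rw [← this, h0, mul_zero]
  have hmain : 1 + Complex.I * (σ : ℂ) * (![(b1 : ℂ), (b2 : ℂ), (b3 : ℂ)] ⬝ᵥ (M⁻¹ *ᵥ ![1, 1, 1]))
      = (r + Complex.I * s) / (-r + Complex.I * s) := by
    rw [hGq, hnum', hden']
    rw [div_eq_div_iff (by rw [← hden']; exact hdet_ne) hden_ne2]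
    linear_combination (2 * r * s) * Complex.I_sq
  refine ⟨hmain, ?_⟩
  rw [hmain, norm_div]
  have hrabs : ‖r + Complex.I * s‖ = ‖-r + Complex.I * s‖ := by
    have h1' : r + Complex.I * s
        = Complex.mk (σ / 2 - σ ^ 3 / 2 * (X - 1/12)) (σ ^ 2 * X - 1) := by
      rw [hr, hs, Complex.mk_eq_add_mul_I]
      push_cast
      ring
    have h2' : -r + Complex.I * s
        = Complex.mk (-(σ / 2 - σ ^ 3 / 2 * (X - 1/12))) (σ ^ 2 * X - 1) := by
      rw [hr, hs, Complex.mk_eq_add_mul_I]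
      push_cast
      ring
    rw [h1', h2', Complex.norm_def, Complex.norm_def, Complex.normSq_mk, Complex.normSq_mk]
    ring_nf
  rw [hrabs, div_self]
  exact norm_ne_zero_iff.mpr hden_ne2
end

section
/- Fix X ∈ ℝ and define the phase error φ(σ) = σ − 2·arctan(2(σ²X − 1)/(σ − σ³(X − 1/12))) − π for σ > 0 sufficiently small. Then φ(σ) − ((1 − 10X)/120)σ⁵ + ((336X² − 84X + 5)/4032)σ⁷ = O(σ⁹) as σ → 0⁺. -/
open Asymptotics Filter Real Topology

/-- Degree-7 Taylor polynomial of `arctan`. -/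
noncomputable def atQ (t : ℝ) : ℝ := t - t ^ 3 / 3 + t ^ 5 / 5 - t ^ 7 / 7

lemma atF_hasDeriv (x : ℝ) :
    HasDerivAt (fun t : ℝ => Real.arctan t - atQ t) (x ^ 8 / (1 + x ^ 2)) x := by
  have h1 := Real.hasDerivAt_arctan x
  have h2 : HasDerivAt atQ (1 - x ^ 2 + x ^ 4 - x ^ 6) x := by
    unfold atQ
    have h := (((hasDerivAt_id x).sub ((hasDerivAt_pow 3 x).div_const 3)).add
      ((hasDerivAt_pow 5 x).div_const 5)).sub ((hasDerivAt_pow 7 x).div_const 7)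
    refine h.congr_deriv ?_
    push_cast
    ring
  have h := h1.sub h2
  refine h.congr_deriv ?_
  have hx : (0:ℝ) < 1 + x ^ 2 := by positivity
  field_simp
  ring

lemma arctan_taylor_bound (t : ℝ) : |Real.arctan t - atQ t| ≤ |t| ^ 9 := by
  set F : ℝ → ℝ := fun t => Real.arctan t - atQ t with hFdef
  have hF0 : F 0 = 0 := by simp [hFdef, atQ]
  have hFmono : Monotone F := by
    apply monotone_of_deriv_nonneg
    · intro x; exact (atF_hasDeriv x).differentiableAt
    · intro x
      rw [(atF_hasDeriv x).deriv]
      positivity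
  have hGmono : Monotone (fun t : ℝ => t ^ 9 - F t) := by
    apply monotone_of_deriv_nonneg
    · exact (differentiable_pow 9).sub fun x => (atF_hasDeriv x).differentiableAt
    · intro x
      rw [deriv_fun_sub (differentiableAt_pow 9) (atF_hasDeriv x).differentiableAt,
        (atF_hasDeriv x).deriv, deriv_pow_field]
      have h8 : (0:ℝ) ≤ x ^ 8 := by positivity
      have h1 : x ^ 8 / (1 + x ^ 2) ≤ x ^ 8 := by
        apply div_le_self h8
        nlinarith [sq_nonneg x]
      push_cast
      norm_num
      linarith
  rcases le_or_gt 0 t with ht | ht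
  · have h1 : 0 ≤ F t := hF0 ▸ hFmono ht
    have h2 : F t ≤ t ^ 9 := by
      have h := hGmono ht
      simp only [hF0] at h
      norm_num at h
      linarith
    rw [abs_of_nonneg h1, abs_of_nonneg ht]
    exact h2
  · have h1 : F t ≤ 0 := hF0 ▸ hFmono ht.le
    have h2 : t ^ 9 ≤ F t := by
      have h := hGmono ht.le
      simp only [hF0] at h
      norm_num at h
      linarith
    rw [abs_of_nonpos h1, abs_of_neg ht]
    nlinarith [h2]

/-- numerator `2(σ²X − 1)`. -/
def nn (X σ : ℝ) : ℝ := 2 * (σ ^ 2 * X - 1)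

/-- reciprocal argument. -/
noncomputable def gg (X σ : ℝ) : ℝ := (σ - σ ^ 3 * (X - 1 / 12)) / nn X σ

/-- residual numerator polynomial. -/
noncomputable def NN (X s : ℝ) : ℝ :=
      (-5/81 : ℝ) +
      (2/9 : ℝ) * X -
      (8/3 : ℝ) * X ^ 2 +
      (32/3 : ℝ) * X ^ 3 -
      (7/216 : ℝ) * s ^ 2 +
      (38/81 : ℝ) * X * s ^ 2 -
      (14/9 : ℝ) * X ^ 2 * s ^ 2 +
      (16 : ℝ) * X ^ 3 * s ^ 2 -
      (64 : ℝ) * X ^ 4 * s ^ 2 -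
      (7/1296 : ℝ) * s ^ 4 +
      (37/216 : ℝ) * X * s ^ 4 -
      (77/54 : ℝ) * X ^ 2 * s ^ 4 +
      (40/9 : ℝ) * X ^ 3 * s ^ 4 -
      (40 : ℝ) * X ^ 4 * s ^ 4 +
      (160 : ℝ) * X ^ 5 * s ^ 4 -
      (37/77760 : ℝ) * s ^ 6 +
      (19/864 : ℝ) * X * s ^ 6 -
      (13/36 : ℝ) * X ^ 2 * s ^ 6 +
      (182/81 : ℝ) * X ^ 3 * s ^ 6 -
      (20/3 : ℝ) * X ^ 4 * s ^ 6 +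
      (160/3 : ℝ) * X ^ 5 * s ^ 6 -
      (640/3 : ℝ) * X ^ 6 * s ^ 6 -
      (1/41472 : ℝ) * s ^ 8 +
      (223/155520 : ℝ) * X * s ^ 8 -
      (29/864 : ℝ) * X ^ 2 * s ^ 8 +
      (41/108 : ℝ) * X ^ 3 * s ^ 8 -
      (158/81 : ℝ) * X ^ 4 * s ^ 8 +
      (50/9 : ℝ) * X ^ 5 * s ^ 8 -
      (40 : ℝ) * X ^ 6 * s ^ 8 +
      (160 : ℝ) * X ^ 7 * s ^ 8 -
      (1/1492992 : ℝ) * s ^ 10 +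
      (1/20736 : ℝ) * X * s ^ 10 -
      (7/4860 : ℝ) * X ^ 2 * s ^ 10 +
      (59/2592 : ℝ) * X ^ 3 * s ^ 10 -
      (43/216 : ℝ) * X ^ 4 * s ^ 10 +
      (8/9 : ℝ) * X ^ 5 * s ^ 10 -
      (22/9 : ℝ) * X ^ 6 * s ^ 10 +
      (16 : ℝ) * X ^ 7 * s ^ 10 -
      (64 : ℝ) * X ^ 8 * s ^ 10 -
      (1/125411328 : ℝ) * s ^ 12 +
      (1/1492992 : ℝ) * X * s ^ 12 -
      (1/41472 : ℝ) * X ^ 2 * s ^ 12 +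
      (5/10368 : ℝ) * X ^ 3 * s ^ 12 -
      (5/864 : ℝ) * X ^ 4 * s ^ 12 +
      (1/24 : ℝ) * X ^ 5 * s ^ 12 -
      (1/6 : ℝ) * X ^ 6 * s ^ 12 +
      (4/9 : ℝ) * X ^ 7 * s ^ 12 -
      (8/3 : ℝ) * X ^ 8 * s ^ 12 +
      (32/3 : ℝ) * X ^ 9 * s ^ 12

set_option maxHeartbeats 2000000 in
/-- Expansion of the three-stage phase error
`φ(σ) = σ − 2·arctan(2(σ²X − 1)/(σ − σ³(X − 1/12))) − π` as `σ → 0⁺`: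
`φ(σ) − ((1 − 10X)/120)σ⁵ + ((336X² − 84X + 5)/4032)σ⁷ = O(σ⁹)`. -/
theorem three_stage_phase_error_expansion (X : ℝ) :
    (fun σ : ℝ =>
        (σ - 2 * Real.arctan (2 * (σ ^ 2 * X - 1) / (σ - σ ^ 3 * (X - 1 / 12)))
            - Real.pi)
          - ((1 - 10 * X) / 120) * σ ^ 5
          + ((336 * X ^ 2 - 84 * X + 5) / 4032) * σ ^ 7)
      =O[nhdsWithin 0 (Set.Ioi 0)] (fun σ : ℝ => σ ^ 9) := by
  set l : Filter ℝ := nhdsWithin 0 (Set.Ioi 0) with hl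
  have hle : l ≤ 𝓝 0 := by rw [hl]; exact nhdsWithin_le_nhds
  have hσpos : ∀ᶠ σ in l, 0 < σ := eventually_mem_nhdsWithin
  have htend : Tendsto (fun σ : ℝ => σ) l (𝓝 0) :=
    tendsto_id.mono_left nhdsWithin_le_nhds
  have hsqX : Tendsto (fun σ : ℝ => σ ^ 2 * X) l (𝓝 0) := by
    have := (htend.pow 2).mul_const X
    simpa using this
  have hsqc : Tendsto (fun σ : ℝ => σ ^ 2 * (X - 1 / 12)) l (𝓝 0) := by
    have := (htend.pow 2).mul_const (X - 1 / 12)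
    simpa using this
  have h1 : ∀ᶠ σ in l, σ ^ 2 * X < 1 := hsqX.eventually (gt_mem_nhds one_pos)
  have h2 : ∀ᶠ σ in l, σ ^ 2 * (X - 1 / 12) < 1 := hsqc.eventually (gt_mem_nhds one_pos)
  -- eventual rewriting of the target function
  have heq : (fun σ : ℝ =>
        (σ - 2 * Real.arctan (2 * (σ ^ 2 * X - 1) / (σ - σ ^ 3 * (X - 1 / 12)))
            - Real.pi)
          - ((1 - 10 * X) / 120) * σ ^ 5
          + ((336 * X ^ 2 - 84 * X + 5) / 4032) * σ ^ 7)
      =ᶠ[l] (fun σ : ℝ =>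
        2 * (Real.arctan (gg X σ) - atQ (gg X σ)) + σ ^ 9 * (NN X σ / nn X σ ^ 7)) := by
    filter_upwards [hσpos, h1, h2] with σ hσ h1 h2
    have hnneg : nn X σ < 0 := by unfold nn; linarith
    have hn0 : nn X σ ≠ 0 := ne_of_lt hnneg
    have hd : 0 < σ - σ ^ 3 * (X - 1 / 12) := by
      have hrw : σ - σ ^ 3 * (X - 1 / 12) = σ * (1 - σ ^ 2 * (X - 1 / 12)) := by ring
      rw [hrw]
      exact mul_pos hσ (by linarith)
    have hfneg : nn X σ / (σ - σ ^ 3 * (X - 1 / 12)) < 0 := div_neg_of_neg_of_pos hnneg hd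
    have harct : Real.arctan (2 * (σ ^ 2 * X - 1) / (σ - σ ^ 3 * (X - 1 / 12)))
        = -(Real.pi / 2) - Real.arctan (gg X σ) := by
      have h := Real.arctan_inv_of_neg hfneg
      rw [inv_div] at h
      have hg' : Real.arctan (gg X σ)
          = -(Real.pi / 2) - Real.arctan (nn X σ / (σ - σ ^ 3 * (X - 1 / 12))) := by
        unfold gg; exact h
      have hnnσ : (2 : ℝ) * (σ ^ 2 * X - 1) = nn X σ := by unfold nn; ring
      rw [hnnσ]
      linarith [hg']
    rw [harct]
    have key : σ + 2 * atQ (gg X σ) - ((1 - 10 * X) / 120) * σ ^ 5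
        + ((336 * X ^ 2 - 84 * X + 5) / 4032) * σ ^ 7
        = σ ^ 9 * (NN X σ / nn X σ ^ 7) := by
      unfold atQ gg nn NN
      unfold nn at hn0
      have hn1 : σ ^ 2 * X - 1 ≠ 0 := fun h => hn0 (by rw [h]; ring)
      field_simp
      ring
    linarith [key]
  -- big-O for the arctan remainder part
  have hn0' : nn X 0 = -2 := by norm_num [nn]
  have hgO : (fun σ : ℝ => gg X σ) =O[l] (fun σ : ℝ => σ) := by
    have hb : (fun σ : ℝ => (1 - σ ^ 2 * (X - 1 / 12)) / nn X σ) =O[l]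
        (fun _ : ℝ => (1 : ℝ)) := by
      have hc : ContinuousAt (fun σ : ℝ => (1 - σ ^ 2 * (X - 1 / 12)) / nn X σ) 0 := by
        apply ContinuousAt.div
        · fun_prop
        · unfold nn; fun_prop
        · rw [hn0']; norm_num
      exact (hc.tendsto.mono_left hle).isBigO_one ℝ
    have hmul := (isBigO_refl (fun σ : ℝ => σ) l).mul hb
    refine hmul.congr (fun σ => ?_) (fun σ => mul_one σ)
    unfold gg
    ring
  have hg9 : (fun σ : ℝ => gg X σ ^ 9) =O[l] (fun σ : ℝ => σ ^ 9) := hgO.pow 9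
  have hFb : (fun σ : ℝ => Real.arctan (gg X σ) - atQ (gg X σ)) =O[l]
      (fun σ : ℝ => gg X σ ^ 9) := by
    apply IsBigO.of_bound 1
    apply Eventually.of_forall
    intro σ
    have h := arctan_taylor_bound (gg X σ)
    simpa [Real.norm_eq_abs, abs_pow] using h
  have hO1 : (fun σ : ℝ => 2 * (Real.arctan (gg X σ) - atQ (gg X σ))) =O[l]
      (fun σ : ℝ => σ ^ 9) := (hFb.trans hg9).const_mul_left 2
  -- big-O for the rational part
  have hO2 : (fun σ : ℝ => σ ^ 9 * (NN X σ / nn X σ ^ 7)) =O[l]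
      (fun σ : ℝ => σ ^ 9) := by
    have hc : ContinuousAt (fun σ : ℝ => NN X σ / nn X σ ^ 7) 0 := by
      apply ContinuousAt.div
      · unfold NN; fun_prop
      · unfold nn; fun_prop
      · rw [hn0']; norm_num
    have hb : (fun σ : ℝ => NN X σ / nn X σ ^ 7) =O[l] (fun _ : ℝ => (1 : ℝ)) :=
      (hc.tendsto.mono_left hle).isBigO_one ℝ
    have hmul := (isBigO_refl (fun σ : ℝ => σ ^ 9) l).mul hb
    exact hmul.congr (fun σ => rfl) (fun σ => mul_one _)
  exact (hO1.add hO2).congr' heq.symm EventuallyEq.rfl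
end

section
/- Define φ(σ) = σ − 2·arctan(2(σ²/10 − 1)/(σ − σ³/60)) − π for σ > 0 sufficiently small (corresponding to X = 1/10). Then φ(σ) − σ⁷/100800 = O(σ⁹) as σ → 0⁺; in particular φ(σ) = O(σ⁷) with nonzero σ⁷-coefficient 1/100800, so the dispersive order is exactly six. -/
open Asymptotics Filter Real

/-- Degree-7 Taylor remainder bound for `arctan` on `[0, t]`. -/
lemma arctan_taylor7 {t : ℝ} (ht : 0 ≤ t) :
    |Real.arctan t - (t - t ^ 3 / 3 + t ^ 5 / 5 - t ^ 7 / 7)| ≤ t ^ 9 := by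
  set f : ℝ → ℝ := fun s => Real.arctan s - (s - s ^ 3 / 3 + s ^ 5 / 5 - s ^ 7 / 7) with hf
  have hder : ∀ s : ℝ, HasDerivAt f (s ^ 8 / (1 + s ^ 2)) s := by
    intro s
    have h1s : (1 : ℝ) + s ^ 2 ≠ 0 := by positivity
    have hp : HasDerivAt (fun s : ℝ => s - s ^ 3 / 3 + s ^ 5 / 5 - s ^ 7 / 7)
        (1 - s ^ 2 + s ^ 4 - s ^ 6) s := by
      have h := (((hasDerivAt_id s).sub ((hasDerivAt_pow 3 s).div_const 3)).add
        ((hasDerivAt_pow 5 s).div_const 5)).sub ((hasDerivAt_pow 7 s).div_const 7)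
      refine h.congr_deriv ?_
      push_cast; ring
    have h := (Real.hasDerivAt_arctan s).sub hp
    refine h.congr_deriv ?_
    field_simp
    ring
  have key := norm_image_sub_le_of_norm_deriv_le_segment'
    (f := f) (a := 0) (b := t) (f' := fun s => s ^ 8 / (1 + s ^ 2)) (C := t ^ 8)
    (fun x _ => (hder x).hasDerivWithinAt)
    (fun x hx => by
      rw [Real.norm_eq_abs, abs_of_nonneg (by positivity)]
      calc x ^ 8 / (1 + x ^ 2) ≤ x ^ 8 / 1 := by gcongr; nlinarith [sq_nonneg x]
        _ = x ^ 8 := div_one _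
        _ ≤ t ^ 8 := pow_le_pow_left₀ hx.1 hx.2.le 8)
    t ⟨ht, le_refl t⟩
  have hf0 : f 0 = 0 := by simp [hf]
  rw [hf0, sub_zero, Real.norm_eq_abs, sub_zero] at key
  calc |f t| ≤ t ^ 8 * t := key
    _ = t ^ 9 := by ring

set_option maxHeartbeats 1000000 in
/-- Pointwise bound for the phase error on `(0, 1/2]`. -/
lemma key_bound {σ : ℝ} (h0 : 0 < σ) (h12 : σ ≤ 1/2) :
    |(σ - 2 * Real.arctan (2 * (σ ^ 2 / 10 - 1) / (σ - σ ^ 3 / 60)) - Real.pi)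
      - σ ^ 7 / 100800| ≤ 3 * σ ^ 9 := by
  have hσ2 : σ ^ 2 ≤ 1/4 := by nlinarith
  set n : ℝ := σ - σ ^ 3 / 60 with hn
  set d : ℝ := 2 - σ ^ 2 / 5 with hd
  have hN : 0 < n := by rw [hn]; nlinarith
  have hD : 0 < d := by rw [hd]; nlinarith
  set t : ℝ := n / d with htdef
  have ht0 : 0 ≤ t := le_of_lt (div_pos hN hD)
  have htσ : t ≤ σ := by
    rw [htdef, div_le_iff₀ hD, hn, hd]; nlinarith
  have hAd : 2 * (σ ^ 2 / 10 - 1) = -d := by rw [hd]; ring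
  have hu : 2 * (σ ^ 2 / 10 - 1) / n < 0 :=
    div_neg_of_neg_of_pos (by rw [hAd]; linarith) hN
  have hinv : (2 * (σ ^ 2 / 10 - 1) / n)⁻¹ = -t := by
    rw [hAd, inv_div, div_neg, htdef]
  have harc : Real.arctan (2 * (σ ^ 2 / 10 - 1) / n)
      = -(Real.pi / 2) + Real.arctan t := by
    have h := Real.arctan_inv_of_neg hu
    rw [hinv, Real.arctan_neg] at h
    linarith
  rw [harc]
  have hQ : σ - 2 * (t - t ^ 3 / 3 + t ^ 5 / 5 - t ^ 7 / 7) - σ ^ 7 / 100800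
      = σ ^ 9 * (562/10125 - 3463/405000 * σ ^ 2 + 197/405000 * σ ^ 4
          - 301/24300000 * σ ^ 6 + 481/1944000000 * σ ^ 8
          - 5147/583200000000 * σ ^ 10 + 31079/244944000000000 * σ ^ 12)
        / d ^ 7 := by
    rw [htdef]
    field_simp [hD.ne']
    rw [hn, hd]
    ring
  have halg : |σ - 2 * (t - t ^ 3 / 3 + t ^ 5 / 5 - t ^ 7 / 7) - σ ^ 7 / 100800| ≤ σ ^ 9 := by
    rw [hQ]
    have e2 : σ ^ 2 ≤ 1 := by nlinarith
    have e4 : σ ^ 4 ≤ 1 := by nlinarith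
    have e6 : σ ^ 6 ≤ 1 := by nlinarith [pow_nonneg h0.le 6]
    have e8 : σ ^ 8 ≤ 1 := by nlinarith [pow_nonneg h0.le 8]
    have e10 : σ ^ 10 ≤ 1 := by nlinarith [pow_nonneg h0.le 10]
    have e12 : σ ^ 12 ≤ 1 := by nlinarith [pow_nonneg h0.le 12]
    have p2 : (0:ℝ) ≤ σ ^ 2 := by positivity
    have p4 : (0:ℝ) ≤ σ ^ 4 := by positivity
    have p6 : (0:ℝ) ≤ σ ^ 6 := by positivity
    have p8 : (0:ℝ) ≤ σ ^ 8 := by positivity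
    have p10 : (0:ℝ) ≤ σ ^ 10 := by positivity
    have p12 : (0:ℝ) ≤ σ ^ 12 := by positivity
    have hQb : |562/10125 - 3463/405000 * σ ^ 2 + 197/405000 * σ ^ 4
            - 301/24300000 * σ ^ 6 + 481/1944000000 * σ ^ 8
            - 5147/583200000000 * σ ^ 10 + 31079/244944000000000 * σ ^ 12| ≤ 1 := by
      rw [abs_le]; constructor <;> nlinarith
    have hd1 : (1:ℝ) ≤ d := by rw [hd]; nlinarith
    have hD1 : (1:ℝ) ≤ d ^ 7 := one_le_pow₀ hd1
    rw [abs_div, abs_mul, abs_of_nonneg (pow_nonneg h0.le 9), abs_of_pos (pow_pos hD 7)]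
    have h9 : (0:ℝ) ≤ σ ^ 9 := pow_nonneg h0.le 9
    have hnum : σ ^ 9 * |562/10125 - 3463/405000 * σ ^ 2 + 197/405000 * σ ^ 4
            - 301/24300000 * σ ^ 6 + 481/1944000000 * σ ^ 8
            - 5147/583200000000 * σ ^ 10 + 31079/244944000000000 * σ ^ 12| ≤ σ ^ 9 := by
      calc σ ^ 9 * |562/10125 - 3463/405000 * σ ^ 2 + 197/405000 * σ ^ 4
            - 301/24300000 * σ ^ 6 + 481/1944000000 * σ ^ 8
            - 5147/583200000000 * σ ^ 10 + 31079/244944000000000 * σ ^ 12|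
          ≤ σ ^ 9 * 1 := mul_le_mul_of_nonneg_left hQb h9
        _ = σ ^ 9 := mul_one _
    calc σ ^ 9 * |562/10125 - 3463/405000 * σ ^ 2 + 197/405000 * σ ^ 4
            - 301/24300000 * σ ^ 6 + 481/1944000000 * σ ^ 8
            - 5147/583200000000 * σ ^ 10 + 31079/244944000000000 * σ ^ 12| / d ^ 7
        ≤ σ ^ 9 * |562/10125 - 3463/405000 * σ ^ 2 + 197/405000 * σ ^ 4
            - 301/24300000 * σ ^ 6 + 481/1944000000 * σ ^ 8
            - 5147/583200000000 * σ ^ 10 + 31079/244944000000000 * σ ^ 12| :=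
          div_le_self (by positivity) hD1
      _ ≤ σ ^ 9 := hnum
  have hg := arctan_taylor7 ht0
  have h3 : t ^ 9 ≤ σ ^ 9 := pow_le_pow_left₀ ht0 htσ 9
  have hre : σ - 2 * (-(Real.pi / 2) + Real.arctan t) - Real.pi - σ ^ 7 / 100800
      = (σ - 2 * (t - t ^ 3 / 3 + t ^ 5 / 5 - t ^ 7 / 7) - σ ^ 7 / 100800)
        + -(2 * (Real.arctan t - (t - t ^ 3 / 3 + t ^ 5 / 5 - t ^ 7 / 7))) := by ring
  rw [hre]
  have habs := abs_add_le (σ - 2 * (t - t ^ 3 / 3 + t ^ 5 / 5 - t ^ 7 / 7) - σ ^ 7 / 100800)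
    (-(2 * (Real.arctan t - (t - t ^ 3 / 3 + t ^ 5 / 5 - t ^ 7 / 7))))
  rw [abs_neg, abs_mul] at habs
  have h2 : |(2:ℝ)| = 2 := by norm_num
  rw [h2] at habs
  have hgs : |Real.arctan t - (t - t ^ 3 / 3 + t ^ 5 / 5 - t ^ 7 / 7)| ≤ σ ^ 9 := hg.trans h3
  calc |(σ - 2 * (t - t ^ 3 / 3 + t ^ 5 / 5 - t ^ 7 / 7) - σ ^ 7 / 100800)
        + -(2 * (Real.arctan t - (t - t ^ 3 / 3 + t ^ 5 / 5 - t ^ 7 / 7)))|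
      ≤ |σ - 2 * (t - t ^ 3 / 3 + t ^ 5 / 5 - t ^ 7 / 7) - σ ^ 7 / 100800|
        + 2 * |Real.arctan t - (t - t ^ 3 / 3 + t ^ 5 / 5 - t ^ 7 / 7)| := habs
    _ ≤ σ ^ 9 + 2 * σ ^ 9 := by linarith
    _ = 3 * σ ^ 9 := by ring

/-- For `X = 1/10` the three-stage phase error
`φ(σ) = σ − 2·arctan(2(σ²/10 − 1)/(σ − σ³/60)) − π` satisfies
`φ(σ) − σ⁷/100800 = O(σ⁹)` as `σ → 0⁺`; in particular `φ = O(σ⁷)` while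
`φ ≠ O(σ⁸)`, so the dispersive order is exactly six. -/
theorem three_stage_X_tenth_dispersive_order :
    ((fun σ : ℝ =>
        (σ - 2 * Real.arctan (2 * (σ ^ 2 / 10 - 1) / (σ - σ ^ 3 / 60))
            - Real.pi) - σ ^ 7 / 100800)
      =O[nhdsWithin 0 (Set.Ioi 0)] (fun σ : ℝ => σ ^ 9))
    ∧ ((fun σ : ℝ =>
        σ - 2 * Real.arctan (2 * (σ ^ 2 / 10 - 1) / (σ - σ ^ 3 / 60))
          - Real.pi)
      =O[nhdsWithin 0 (Set.Ioi 0)] (fun σ : ℝ => σ ^ 7))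
    ∧ ¬ ((fun σ : ℝ =>
        σ - 2 * Real.arctan (2 * (σ ^ 2 / 10 - 1) / (σ - σ ^ 3 / 60))
          - Real.pi)
      =O[nhdsWithin 0 (Set.Ioi 0)] (fun σ : ℝ => σ ^ 8)) := by
  have hmem : Set.Ioc (0:ℝ) (1/2) ∈ nhdsWithin (0:ℝ) (Set.Ioi 0) :=
    Ioc_mem_nhdsGT (by norm_num)
  -- Part 1
  have h1 : (fun σ : ℝ =>
        (σ - 2 * Real.arctan (2 * (σ ^ 2 / 10 - 1) / (σ - σ ^ 3 / 60))
            - Real.pi) - σ ^ 7 / 100800)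
      =O[nhdsWithin 0 (Set.Ioi 0)] (fun σ : ℝ => σ ^ 9) := by
    rw [isBigO_iff]
    refine ⟨3, ?_⟩
    filter_upwards [hmem] with σ hσ
    rw [Real.norm_eq_abs, Real.norm_eq_abs, abs_of_pos (pow_pos hσ.1 9)]
    exact key_bound hσ.1 hσ.2
  -- σ^9 = O(σ^k) for k ≤ 9
  have hstep : ∀ k : ℕ, k ≤ 9 → (fun σ : ℝ => σ ^ 9)
      =O[nhdsWithin 0 (Set.Ioi 0)] (fun σ : ℝ => σ ^ k) := by
    intro k hk
    rw [isBigO_iff]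
    refine ⟨1, ?_⟩
    filter_upwards [hmem] with σ hσ
    rw [Real.norm_eq_abs, Real.norm_eq_abs, abs_of_pos (pow_pos hσ.1 9),
      abs_of_pos (pow_pos hσ.1 k), one_mul]
    exact pow_le_pow_of_le_one hσ.1.le (by linarith [hσ.2]) hk
  -- c·σ^7 = O(σ^7)
  have hc7 : (fun σ : ℝ => σ ^ 7 / 100800)
      =O[nhdsWithin 0 (Set.Ioi 0)] (fun σ : ℝ => σ ^ 7) := by
    rw [isBigO_iff]
    refine ⟨1/100800, ?_⟩
    filter_upwards with σ
    rw [Real.norm_eq_abs, Real.norm_eq_abs, abs_div]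
    rw [abs_of_pos (by norm_num : (0:ℝ) < 100800)]
    rw [div_eq_mul_inv, mul_comm]
    norm_num
  have h2 : (fun σ : ℝ =>
        σ - 2 * Real.arctan (2 * (σ ^ 2 / 10 - 1) / (σ - σ ^ 3 / 60))
          - Real.pi)
      =O[nhdsWithin 0 (Set.Ioi 0)] (fun σ : ℝ => σ ^ 7) := by
    have h := (h1.trans (hstep 7 (by norm_num))).add hc7
    have heq : (fun σ : ℝ =>
        ((σ - 2 * Real.arctan (2 * (σ ^ 2 / 10 - 1) / (σ - σ ^ 3 / 60))
            - Real.pi) - σ ^ 7 / 100800) + σ ^ 7 / 100800)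
        = (fun σ : ℝ =>
        σ - 2 * Real.arctan (2 * (σ ^ 2 / 10 - 1) / (σ - σ ^ 3 / 60))
          - Real.pi) := by
      funext σ; ring
    rwa [heq] at h
  refine ⟨h1, h2, ?_⟩
  intro hcon
  have h87 := hcon.sub (h1.trans (hstep 8 (by norm_num)))
  have hsub : (fun σ : ℝ =>
        (σ - 2 * Real.arctan (2 * (σ ^ 2 / 10 - 1) / (σ - σ ^ 3 / 60))
          - Real.pi)
        - ((σ - 2 * Real.arctan (2 * (σ ^ 2 / 10 - 1) / (σ - σ ^ 3 / 60))
            - Real.pi) - σ ^ 7 / 100800))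
      = (fun σ : ℝ => σ ^ 7 / 100800) := by
    funext σ; ring
  rw [hsub] at h87
  rw [isBigO_iff] at h87
  obtain ⟨C, hC⟩ := h87
  set ε : ℝ := min (1/2) (1/(100800*(|C|+1))) with hε
  have hεpos : 0 < ε := by
    apply lt_min (by norm_num)
    positivity
  have hmem' : ∀ᶠ σ in nhdsWithin (0:ℝ) (Set.Ioi 0), σ ∈ Set.Ioc 0 ε :=
    Ioc_mem_nhdsGT hεpos
  obtain ⟨σ₀, hb, hσ₀⟩ := (hC.and hmem').exists
  have hpos : 0 < σ₀ := hσ₀.1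
  rw [Real.norm_eq_abs, Real.norm_eq_abs, abs_of_pos (by positivity),
    abs_of_pos (by positivity : (0:ℝ) < σ₀ ^ 8)] at hb
  have hC0 : C ≤ |C| := le_abs_self C
  have hεle : ε ≤ 1/(100800*(|C|+1)) := min_le_right _ _
  have hσε : σ₀ ≤ ε := hσ₀.2
  have k1 : C * σ₀ ^ 8 ≤ |C| * σ₀ ^ 8 :=
    mul_le_mul_of_nonneg_right hC0 (pow_nonneg hpos.le 8)
  have k2 : |C| * σ₀ ^ 8 = |C| * σ₀ * σ₀ ^ 7 := by ring
  have k3 : |C| * σ₀ ≤ |C| * ε := mul_le_mul_of_nonneg_left hσε (abs_nonneg C)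
  have k4 : |C| * ε ≤ |C| * (1/(100800*(|C|+1))) :=
    mul_le_mul_of_nonneg_left hεle (abs_nonneg C)
  have k5 : |C| * (1/(100800*(|C|+1))) < 1/100800 := by
    rw [mul_one_div, div_lt_div_iff₀ (by positivity) (by norm_num)]
    nlinarith [abs_nonneg C]
  have k6 : |C| * σ₀ < 1/100800 := lt_of_le_of_lt (k3.trans k4) k5
  have k7 : |C| * σ₀ * σ₀ ^ 7 < (1/100800) * σ₀ ^ 7 :=
    mul_lt_mul_of_pos_right k6 (pow_pos hpos 7)
  have k8 : σ₀ ^ 7 / 100800 = (1/100800) * σ₀ ^ 7 := by ring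
  linarith [hb, k1, k7, k2.le, k2.ge]
end

section
/- There is no real number X satisfying simultaneously 1 − 10X = 0 and 336X² − 84X + 5 = 0. Consequently, since the phase error of a fourth-order three-stage minimal-dissipation scheme expands as φ(σ) = ((1 − 10X)/120)σ⁵ − ((336X² − 84X + 5)/4032)σ⁷ + O(σ⁹), no choice of X makes both the σ⁵ and σ⁷ coefficients vanish, so the dispersive order of such a scheme never exceeds six. -/
/-!
For small `σ > 0` the quantity `h = (σ - σ³(X - 1/12)) / (2(σ²X - 1))` is negative, so
`arctan h⁻¹ = -π/2 - arctan h` and the phase error equals `σ + 2 arctan h`. Replacing `arctan` by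
its degree-7 Taylor polynomial `P₇` costs `O(h⁹) = O(σ⁹)`, and clearing the bounded denominator
`105 (2(σ²X - 1))⁷` turns `σ + 2 P₇(h)` into `σ⁵ N(X, σ)` with `N` a polynomial. So a phase error
`O(σ⁸)` forces `N(X, 0) = 1120X - 112 = 0`, i.e. `X = 1/10`; but `N(1/10, σ) = σ² N₁₀(σ)` with
`N₁₀(0) = -2/15 ≠ 0`. These constant terms are `-13440` times the `σ⁵` coefficient `(1 - 10X)/120`
and the `σ⁷` coefficient `-(336X² - 84X + 5)/4032` (at `X = 1/10`) of the phase error.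
-/

open Asymptotics Filter Real Topology Set

noncomputable def arctanTaylor7 (t : ℝ) : ℝ := t - t ^ 3 / 3 + t ^ 5 / 5 - t ^ 7 / 7

lemma hasDerivAt_arctan_sub_arctanTaylor7 (x : ℝ) :
    HasDerivAt (fun t => arctan t - arctanTaylor7 t) (x ^ 8 / (1 + x ^ 2)) x := by
  have := (hasDerivAt_arctan x).sub ((((hasDerivAt_id x).sub
    ((hasDerivAt_pow 3 x).div_const 3)).add ((hasDerivAt_pow 5 x).div_const 5)).sub
    ((hasDerivAt_pow 7 x).div_const 7))
  refine this.congr_deriv ?_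
  field_simp
  push_cast
  ring

lemma abs_arctan_sub_arctanTaylor7_le (t : ℝ) : |arctan t - arctanTaylor7 t| ≤ |t| ^ 9 := by
  have bound : ∀ x ∈ uIcc 0 t, ‖x ^ 8 / (1 + x ^ 2)‖ ≤ |t| ^ 8 := by
    intro x hx
    have hxt : |x| ≤ |t| := by simpa using abs_sub_left_of_mem_uIcc hx
    rw [norm_div, Real.norm_eq_abs, Real.norm_eq_abs, abs_of_pos (by positivity : 0 < 1 + x ^ 2)]
    calc |x ^ 8| / (1 + x ^ 2) ≤ |x ^ 8| := div_le_self (abs_nonneg _) (by nlinarith [sq_nonneg x])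
      _ = |x| ^ 8 := abs_pow x 8
      _ ≤ |t| ^ 8 := pow_le_pow_left₀ (abs_nonneg x) hxt 8
  have := Convex.norm_image_sub_le_of_norm_hasDerivWithin_le
    (fun x _ => (hasDerivAt_arctan_sub_arctanTaylor7 x).hasDerivWithinAt) bound
    (convex_uIcc 0 t) left_mem_uIcc right_mem_uIcc
  simpa [arctanTaylor7, pow_succ] using this

lemma arctan_sub_arctanTaylor7_isBigO :
    (fun t => arctan t - arctanTaylor7 t) =O[𝓝 0] (· ^ 9) :=
  isBigO_of_le _ fun t => by
    simpa only [Real.norm_eq_abs, abs_pow] using abs_arctan_sub_arctanTaylor7_le t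

noncomputable def phaseArg (X σ : ℝ) : ℝ := (σ - σ ^ 3 * (X - 1 / 12)) / (2 * (σ ^ 2 * X - 1))

lemma phaseArg_eq_mul (X σ : ℝ) :
    phaseArg X σ = σ * ((1 - σ ^ 2 * (X - 1 / 12)) / (2 * (σ ^ 2 * X - 1))) := by
  unfold phaseArg; ring

lemma tendsto_phaseArg_div_self (X : ℝ) :
    Tendsto (fun σ : ℝ => (1 - σ ^ 2 * (X - 1 / 12)) / (2 * (σ ^ 2 * X - 1))) (𝓝 0)
      (𝓝 (-1 / 2)) := by
  have hc : ContinuousAt (fun σ : ℝ => (1 - σ ^ 2 * (X - 1 / 12)) / (2 * (σ ^ 2 * X - 1))) 0 :=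
    by fun_prop (disch := norm_num)
  convert hc.tendsto using 2
  norm_num

lemma phaseArg_isBigO (X : ℝ) : phaseArg X =O[𝓝 0] fun σ => σ :=
  ((isBigO_refl (fun σ : ℝ => σ) _).mul ((tendsto_phaseArg_div_self X).isBigO_one ℝ)).congr
    (fun σ => (phaseArg_eq_mul X σ).symm) mul_one

lemma eventually_phaseArg_neg (X : ℝ) : ∀ᶠ σ in 𝓝[>] 0, phaseArg X σ < 0 := by
  have hneg := (tendsto_phaseArg_div_self X).eventually
    (eventually_lt_nhds (by norm_num : (-1 / 2 : ℝ) < 0))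
  filter_upwards [self_mem_nhdsWithin, nhdsWithin_le_nhds hneg] with σ hσ hneg
  rw [phaseArg_eq_mul]
  exact mul_neg_of_pos_of_neg hσ hneg

lemma phase_error_eq {X σ : ℝ} (h : phaseArg X σ < 0) :
    σ - 2 * arctan (2 * (σ ^ 2 * X - 1) / (σ - σ ^ 3 * (X - 1 / 12))) - π
      = σ + 2 * arctan (phaseArg X σ) := by
  rw [← inv_div, ← phaseArg, arctan_inv_of_neg h]
  ring

noncomputable def phaseNum (X σ : ℝ) : ℝ :=
  (1120*X - 112) + (-6720*X^2 + 504*X + 50/3)*σ^2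
  + (16800*X^3 - 672*X^2 - 280/3*X - 175/27)*σ^4
  + (-22400*X^4 - 280*X^3 + 560/3*X^2 + 1330/27*X - 245/72)*σ^6
  + (16800*X^5 + 1680*X^4 - 350/3*X^3 - 2695/18*X^2 + 1295/72*X - 245/432)*σ^8
  + (-6720*X^6 - 1848*X^5 - 350/3*X^4 + 6370/27*X^3 - 455/12*X^2 + 665/288*X - 259/5184)*σ^10
  + (1120*X^7 + 896*X^6 + 700/3*X^5 - 5530/27*X^4 + 1435/36*X^3 - 1015/288*X^2 + 1561/10368*X
      - 35/13824)*σ^12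
  + (-168*X^7 - 140*X^6 + 280/3*X^5 - 1505/72*X^4 + 2065/864*X^3 - 49/324*X^2 + 35/6912*X
      - 35/497664)*σ^14
  + (30*X^7 - 35/2*X^6 + 35/8*X^5 - 175/288*X^4 + 175/3456*X^3 - 35/13824*X^2 + 35/497664*X
      - 5/5971968)*σ^16

noncomputable def phaseNumTenth (σ : ℝ) : ℝ :=
  -2/15 + (-3871/675)*σ^2 + (4697/5400)*σ^4 + (-1253/27000)*σ^6
  + (1351/1620000)*σ^8 + (1309/648000000)*σ^10 + (-259/38880000000)*σ^12
  + (1/93312000000)*σ^14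

lemma pow_five_mul_phaseNum {X σ : ℝ} (hv : σ ^ 2 * X - 1 ≠ 0) :
    σ ^ 5 * phaseNum X σ
      = 105 * (2 * (σ ^ 2 * X - 1)) ^ 7 * (σ + 2 * arctanTaylor7 (phaseArg X σ)) := by
  unfold phaseNum arctanTaylor7 phaseArg
  field_simp
  ring

lemma phaseNum_one_div_ten (σ : ℝ) : phaseNum (1 / 10) σ = σ ^ 2 * phaseNumTenth σ := by
  unfold phaseNum phaseNumTenth
  ring

lemma eq_zero_of_pow_mul_isBigO {g : ℝ → ℝ} {k n : ℕ} (hg : ContinuousAt g 0) (hkn : k < n)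
    (h : (fun σ => σ ^ k * g σ) =O[𝓝[>] 0] (· ^ n)) : g 0 = 0 := by
  have hcancel : g =O[𝓝[>] 0] (· ^ (n - k)) := by
    refine ((isBigO_refl (fun σ : ℝ => σ⁻¹ ^ k) _).mul h).congr' ?_ ?_ <;>
      filter_upwards [self_mem_nhdsWithin] with σ (hσ : 0 < σ)
    · rw [inv_pow, inv_mul_cancel_left₀ (pow_ne_zero k hσ.ne')]
    · rw [pow_sub₀ _ hσ.ne' hkn.le]
      ring
  have hpow : Tendsto (· ^ (n - k)) (𝓝[>] (0 : ℝ)) (𝓝 0) :=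
    ((continuous_pow _).tendsto' 0 0 (zero_pow (by omega))).mono_left nhdsWithin_le_nhds
  exact tendsto_nhds_unique (hg.tendsto.mono_left nhdsWithin_le_nhds) (hcancel.trans_tendsto hpow)

lemma pow_five_mul_phaseNum_isBigO {X : ℝ}
    (hφ : (fun σ : ℝ => σ - 2 * arctan (2 * (σ ^ 2 * X - 1) / (σ - σ ^ 3 * (X - 1 / 12))) - π)
      =O[𝓝[>] 0] (· ^ 8)) :
    (fun σ => σ ^ 5 * phaseNum X σ) =O[𝓝[>] 0] (· ^ 8) := by
  have hv : ∀ᶠ σ in 𝓝[>] 0, σ ^ 2 * X - 1 ≠ 0 :=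
    nhdsWithin_le_nhds <| (by fun_prop : Continuous fun σ : ℝ => σ ^ 2 * X - 1).continuousAt
      |>.eventually_ne (by norm_num)
  have hdenom : (fun σ : ℝ => 105 * (2 * (σ ^ 2 * X - 1)) ^ 7) =O[𝓝[>] 0] fun _ => (1 : ℝ) :=
    ((by fun_prop : Continuous fun σ : ℝ => 105 * (2 * (σ ^ 2 * X - 1)) ^ 7).tendsto 0
      |>.isBigO_one ℝ).mono nhdsWithin_le_nhds
  have htaylor : (fun σ => arctan (phaseArg X σ) - arctanTaylor7 (phaseArg X σ))
      =O[𝓝[>] 0] (· ^ 8) :=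
    ((arctan_sub_arctanTaylor7_isBigO.comp_tendsto ((phaseArg_isBigO X).trans_tendsto tendsto_id)
      |>.trans ((phaseArg_isBigO X).pow 9)).trans
      (isLittleO_pow_pow (by norm_num : 8 < 9)).isBigO).mono nhdsWithin_le_nhds
  refine (hdenom.mul (hφ.sub (htaylor.const_mul_left 2))).congr' ?_
    (.of_forall fun σ => one_mul _)
  filter_upwards [hv, eventually_phaseArg_neg X] with σ hv hneg
  rw [pow_five_mul_phaseNum hv, phase_error_eq hneg]
  ring

/-- No real `X` annihilates both the `σ⁵` and the `σ⁷`
coefficients of the three-stage phase error expansion; consequently, for no `X`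
is the phase error `σ − 2·arctan(2(σ²X − 1)/(σ − σ³(X − 1/12))) − π` of order
`O(σ⁸)` as `σ → 0⁺`, i.e. the dispersive order of a fourth-order three-stage
minimal-dissipation scheme never exceeds six. -/
theorem three_stage_dispersive_order_at_most_six :
    (¬ ∃ X : ℝ, 1 - 10 * X = 0 ∧ 336 * X ^ 2 - 84 * X + 5 = 0)
    ∧ ∀ X : ℝ,
      ¬ ((fun σ : ℝ =>
            σ - 2 * Real.arctan (2 * (σ ^ 2 * X - 1) / (σ - σ ^ 3 * (X - 1 / 12)))
              - Real.pi)
        =O[nhdsWithin 0 (Set.Ioi 0)] (fun σ : ℝ => σ ^ 8)) := by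
  refine ⟨?_, fun X hφ => ?_⟩
  · rintro ⟨X, h1, h2⟩
    obtain rfl : X = 1 / 10 := by linarith
    norm_num at h2
  have hN := pow_five_mul_phaseNum_isBigO hφ
  obtain rfl : X = 1 / 10 := by
    have h0 := eq_zero_of_pow_mul_isBigO
      (by unfold phaseNum; fun_prop : Continuous (phaseNum X)).continuousAt (by norm_num) hN
    norm_num [phaseNum] at h0
    linarith
  have hN₁₀ : (fun σ => σ ^ 7 * phaseNumTenth σ) =O[𝓝[>] 0] (· ^ 8) :=
    hN.congr_left fun σ => by rw [phaseNum_one_div_ten]; ring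
  have h0 := eq_zero_of_pow_mul_isBigO
    (by unfold phaseNumTenth; fun_prop : Continuous phaseNumTenth).continuousAt (by norm_num) hN₁₀
  norm_num [phaseNumTenth] at h0
end
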